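/- arXiv:math-ph/0611060 — 14 statements merged into one kernel-verified Lean document; each statement's English description precedes it below -/
import Mathlib

section
/- Let 0<α₁<α₂ and take parameters (α₀,α₁,α₂,α₃)=(α₁,α₁,α₂,α₂). For every point (x,y)∈ℝ⁴×ℝ⁴ with C₁(x)=0 and C₂(x,y)=0, the Dirac brackets {H,J₁}, {H,J₂} and {J₁,J₂} all vanish at (x,y), where H=½(y₀²+y₁²+y₂²+y₃²), J₁=x₀y₁−x₁y₀ and J₂=x₂y₃−x₃y₂. -/
noncomputable section

/-- Points of `T*ℝⁿ = ℝⁿ × ℝⁿ`, written `(x, y)`. -/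
abbrev Pt (n : ℕ) := (Fin n → ℝ) × (Fin n → ℝ)

/-- `D(x) = Σᵢ xᵢ²/αᵢ²`. -/
def Dq {n : ℕ} (α : Fin n → ℝ) (x : Fin n → ℝ) : ℝ := ∑ i, (x i)^2 / (α i)^2

/-- Partial derivative of `f` in the direction `xᵢ`. -/
def pdx {n : ℕ} (f : Pt n → ℝ) (p : Pt n) (i : Fin n) : ℝ :=
  fderiv ℝ f p (Pi.single i 1, 0)

/-- Partial derivative of `f` in the direction `yᵢ`. -/
def pdy {n : ℕ} (f : Pt n → ℝ) (p : Pt n) (i : Fin n) : ℝ :=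
  fderiv ℝ f p (0, Pi.single i 1)

/-- The Dirac bracket on `T*ℝⁿ` for the ellipsoid with semi-axes `√(αᵢ)`:
`{f,g} = Σᵢₖ (∂f/∂xᵢ ∂g/∂yₖ − ∂g/∂xᵢ ∂f/∂yₖ)(δᵢₖ − xᵢxₖ/(D αᵢ αₖ))
        − Σᵢₖ (∂f/∂yᵢ)(∂g/∂yₖ)(xᵢyₖ − xₖyᵢ)/(D αᵢ αₖ)`. -/
def dirac {n : ℕ} (α : Fin n → ℝ) (f g : Pt n → ℝ) (p : Pt n) : ℝ :=
  (∑ i, ∑ k,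
    (pdx f p i * pdy g p k - pdx g p i * pdy f p k) *
      ((if i = k then (1:ℝ) else 0) - p.1 i * p.1 k / (Dq α p.1 * α i * α k)))
  - ∑ i, ∑ k,
      pdy f p i * pdy g p k * (p.1 i * p.2 k - p.1 k * p.2 i) / (Dq α p.1 * α i * α k)

/-- The constraint `C₁(x) = Σᵢ xᵢ²/αᵢ − 1`. -/
def C1 {n : ℕ} (α : Fin n → ℝ) (x : Fin n → ℝ) : ℝ := (∑ i, (x i)^2 / α i) - 1

/-- The constraint `C₂(x,y) = Σᵢ xᵢyᵢ/αᵢ`. -/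
def C2 {n : ℕ} (α : Fin n → ℝ) (p : Pt n) : ℝ := ∑ i, p.1 i * p.2 i / α i

/-- The Hamiltonian `H = ½(y₀² + y₁² + y₂² + y₃²)`. -/
def H4 (p : Pt 4) : ℝ := (1/2) * ((p.2 0)^2 + (p.2 1)^2 + (p.2 2)^2 + (p.2 3)^2)

/-- The angular momentum `J₁ = x₀y₁ − x₁y₀`. -/
def Jmom1 (p : Pt 4) : ℝ := p.1 0 * p.2 1 - p.1 1 * p.2 0

/-- The angular momentum `J₂ = x₂y₃ − x₃y₂`. -/
def Jmom2 (p : Pt 4) : ℝ := p.1 2 * p.2 3 - p.1 3 * p.2 2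

/-!
On `C₂ = 0` the `y`-gradient of `H`, which is `y`, is `α`-orthogonal to `x`, and the
`y`-gradient of `Jₖ` is so identically, because `Jₖ` rotates a coordinate plane in which the
two weights `αᵢ` agree. For two functions with this property every correction term of the Dirac
bracket vanishes, leaving the canonical Poisson bracket; there `{H, Jₖ} = 0` by rotation
invariance of `H`, and `{J₁, J₂} = 0` because `J₁` and `J₂` involve disjoint coordinates.
-/

def weightedInner {n : ℕ} (α : Fin n → ℝ) (u v : Fin n → ℝ) : ℝ := ∑ i, u i * v i / α i

def poissonBracket {n : ℕ} (f g : Pt n → ℝ) (p : Pt n) : ℝ :=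
  ∑ i, (pdx f p i * pdy g p i - pdx g p i * pdy f p i)

def kinetic {n : ℕ} (p : Pt n) : ℝ := (1/2) * ∑ i, (p.2 i)^2

def angMom {n : ℕ} (a b : Fin n) (p : Pt n) : ℝ := p.1 a * p.2 b - p.1 b * p.2 a

section Bracket

variable {n : ℕ} (α : Fin n → ℝ) (f g : Pt n → ℝ) (p : Pt n)

theorem dirac_eq :
    dirac α f g p = poissonBracket f g p
      - (weightedInner α (pdx f p) p.1 * weightedInner α (pdy g p) p.1
          - weightedInner α (pdx g p) p.1 * weightedInner α (pdy f p) p.1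
          + weightedInner α (pdy f p) p.1 * weightedInner α (pdy g p) p.2
          - weightedInner α (pdy f p) p.2 * weightedInner α (pdy g p) p.1) / Dq α p.1 := by
  have hδ : ∀ i k, (pdx f p i * pdy g p k - pdx g p i * pdy f p k) *
      ((if i = k then (1:ℝ) else 0) - p.1 i * p.1 k / (Dq α p.1 * α i * α k)) =
      (if i = k then pdx f p i * pdy g p k - pdx g p i * pdy f p k else 0)
        - (pdx f p i * p.1 i / α i) * (pdy g p k * p.1 k / α k) / Dq α p.1
        + (pdx g p i * p.1 i / α i) * (pdy f p k * p.1 k / α k) / Dq α p.1 := by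
    intro i k
    simp only [div_eq_mul_inv, mul_inv]
    split_ifs <;> ring
  have hyy : ∀ i k,
      pdy f p i * pdy g p k * (p.1 i * p.2 k - p.1 k * p.2 i) / (Dq α p.1 * α i * α k) =
      (pdy f p i * p.1 i / α i) * (pdy g p k * p.2 k / α k) / Dq α p.1
        - (pdy f p i * p.2 i / α i) * (pdy g p k * p.1 k / α k) / Dq α p.1 := by
    intro i k
    simp only [div_eq_mul_inv, mul_inv]
    ring
  simp only [dirac, hδ, hyy, Finset.sum_add_distrib, Finset.sum_sub_distrib, Finset.sum_ite_eq,
    Finset.mem_univ, if_true, ← Finset.sum_div, ← Finset.sum_mul_sum, poissonBracket,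
    weightedInner]
  ring

end Bracket

theorem dirac_eq_poissonBracket_of_weightedInner_pdy_eq_zero {n : ℕ} {α : Fin n → ℝ}
    {f g : Pt n → ℝ} {p : Pt n} (hf : weightedInner α (pdy f p) p.1 = 0)
    (hg : weightedInner α (pdy g p) p.1 = 0) :
    dirac α f g p = poissonBracket f g p := by
  rw [dirac_eq, hf, hg]
  ring

section Derivatives

variable {n : ℕ}

def coordX (i : Fin n) : Pt n →L[ℝ] ℝ :=
  (ContinuousLinearMap.proj i).comp (ContinuousLinearMap.fst ℝ _ _)

def coordY (i : Fin n) : Pt n →L[ℝ] ℝ :=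
  (ContinuousLinearMap.proj i).comp (ContinuousLinearMap.snd ℝ _ _)

@[simp]
theorem coordX_apply (i : Fin n) (v : Pt n) : coordX i v = v.1 i := rfl

@[simp]
theorem coordY_apply (i : Fin n) (v : Pt n) : coordY i v = v.2 i := rfl

theorem hasFDerivAt_coordX (i : Fin n) (p : Pt n) :
    HasFDerivAt (fun q : Pt n => q.1 i) (coordX i) p :=
  (coordX i).hasFDerivAt

theorem hasFDerivAt_coordY (i : Fin n) (p : Pt n) :
    HasFDerivAt (fun q : Pt n => q.2 i) (coordY i) p :=
  (coordY i).hasFDerivAt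

theorem hasFDerivAt_kinetic (p : Pt n) :
    HasFDerivAt kinetic (∑ i, p.2 i • coordY i) p := by
  refine ((HasFDerivAt.fun_sum (u := Finset.univ) fun i _ =>
    (hasFDerivAt_coordY i p).pow 2).const_mul (1/2 : ℝ)).congr_fderiv ?_
  ext v
  · simp
  · simp [Finset.mul_sum, ← mul_assoc]

theorem hasFDerivAt_angMom (a b : Fin n) (p : Pt n) :
    HasFDerivAt (angMom a b)
      (p.1 a • coordY b + p.2 b • coordX a - (p.1 b • coordY a + p.2 a • coordX b)) p :=
  ((hasFDerivAt_coordX a p).mul (hasFDerivAt_coordY b p)).sub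
    ((hasFDerivAt_coordX b p).mul (hasFDerivAt_coordY a p))

theorem pdx_kinetic (p : Pt n) : pdx kinetic p = 0 := by
  ext i
  simp [pdx, (hasFDerivAt_kinetic p).fderiv]

theorem pdy_kinetic (p : Pt n) : pdy kinetic p = p.2 := by
  ext i
  simp [pdy, (hasFDerivAt_kinetic p).fderiv, Pi.single_apply]

theorem pdx_angMom (a b : Fin n) (p : Pt n) :
    pdx (angMom a b) p = Pi.single a (p.2 b) - Pi.single b (p.2 a) := by
  ext i
  simp [pdx, (hasFDerivAt_angMom a b p).fderiv, Pi.single_apply, eq_comm]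

theorem pdy_angMom (a b : Fin n) (p : Pt n) :
    pdy (angMom a b) p = Pi.single b (p.1 a) - Pi.single a (p.1 b) := by
  ext i
  simp [pdy, (hasFDerivAt_angMom a b p).fderiv, Pi.single_apply, eq_comm]

end Derivatives

section Brackets

variable {n : ℕ} (p : Pt n)

theorem weightedInner_pdy_kinetic (α : Fin n → ℝ) :
    weightedInner α (pdy kinetic p) p.1 = C2 α p := by
  simp only [weightedInner, C2, pdy_kinetic, mul_comm]

theorem weightedInner_pdy_angMom {α : Fin n → ℝ} {a b : Fin n} (hab : α a = α b) :
    weightedInner α (pdy (angMom a b) p) p.1 = 0 := by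
  simp only [weightedInner, pdy_angMom, Pi.sub_apply, Pi.single_apply, sub_mul, sub_div, ite_mul,
    zero_mul, ite_div, zero_div, Finset.sum_sub_distrib, Finset.sum_ite_eq', Finset.mem_univ,
    if_true, hab]
  ring

theorem poissonBracket_kinetic_angMom (a b : Fin n) :
    poissonBracket kinetic (angMom a b) p = 0 := by
  simp only [poissonBracket, pdx_kinetic, pdy_kinetic, pdx_angMom, Pi.zero_apply, Pi.sub_apply,
    Pi.single_apply, zero_mul, zero_sub, neg_sub, sub_mul, ite_mul, Finset.sum_sub_distrib,
    Finset.sum_ite_eq', Finset.mem_univ, if_true]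
  ring

theorem poissonBracket_angMom_angMom {a b c d : Fin n} (hac : a ≠ c) (had : a ≠ d) (hbc : b ≠ c)
    (hbd : b ≠ d) : poissonBracket (angMom a b) (angMom c d) p = 0 := by
  refine Finset.sum_eq_zero fun i _ => ?_
  simp only [pdx_angMom, pdy_angMom, Pi.sub_apply, Pi.single_apply]
  split_ifs <;> simp_all

end Brackets

theorem H4_eq_kinetic : H4 = kinetic := by
  funext p
  rw [kinetic, Fin.sum_univ_four]
  rfl

theorem Jmom1_eq_angMom : Jmom1 = angMom 0 1 := rfl

theorem Jmom2_eq_angMom : Jmom2 = angMom 2 3 := rfl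

theorem stmt0_general (α₁ α₂ : ℝ) (p : Pt 4)
    (hC2 : C2 ![α₁, α₁, α₂, α₂] p = 0) :
    dirac ![α₁, α₁, α₂, α₂] H4 Jmom1 p = 0 ∧
    dirac ![α₁, α₁, α₂, α₂] H4 Jmom2 p = 0 ∧
    dirac ![α₁, α₁, α₂, α₂] Jmom1 Jmom2 p = 0 := by
  have hH : weightedInner ![α₁, α₁, α₂, α₂] (pdy kinetic p) p.1 = 0 := by
    rw [weightedInner_pdy_kinetic, hC2]
  have hJ₁ := weightedInner_pdy_angMom p (α := ![α₁, α₁, α₂, α₂]) (a := 0) (b := 1) rfl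
  have hJ₂ := weightedInner_pdy_angMom p (α := ![α₁, α₁, α₂, α₂]) (a := 2) (b := 3) rfl
  rw [H4_eq_kinetic, Jmom1_eq_angMom, Jmom2_eq_angMom,
    dirac_eq_poissonBracket_of_weightedInner_pdy_eq_zero hH hJ₁,
    dirac_eq_poissonBracket_of_weightedInner_pdy_eq_zero hH hJ₂,
    dirac_eq_poissonBracket_of_weightedInner_pdy_eq_zero hJ₁ hJ₂]
  exact ⟨poissonBracket_kinetic_angMom p 0 1, poissonBracket_kinetic_angMom p 2 3,
    poissonBracket_angMom_angMom p (by decide) (by decide) (by decide) (by decide)⟩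

/-- On the constraint set `C₁ = C₂ = 0` of the ellipsoid with parameters
`(α₁,α₁,α₂,α₂)`, the Dirac brackets `{H,J₁}`, `{H,J₂}`, `{J₁,J₂}` all vanish. -/
theorem stmt0 (α₁ α₂ : ℝ) (hα₁ : 0 < α₁) (hα₁₂ : α₁ < α₂) (p : Pt 4)
    (hC1 : C1 ![α₁, α₁, α₂, α₂] p.1 = 0)
    (hC2 : C2 ![α₁, α₁, α₂, α₂] p = 0) :
    dirac ![α₁, α₁, α₂, α₂] H4 Jmom1 p = 0 ∧
    dirac ![α₁, α₁, α₂, α₂] H4 Jmom2 p = 0 ∧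
    dirac ![α₁, α₁, α₂, α₂] Jmom1 Jmom2 p = 0 :=
  stmt0_general α₁ α₂ p hC2
end
end

section
/- Let 0<α₁<α₂ and take parameters (α₀,α₁,α₂,α₃)=(α₁,α₁,α₂,α₂). Define G₁=y₀²+y₁²+(1/(α₁−α₂))·Σ_{i∈{0,1},k∈{2,3}}(xᵢy_k−x_kyᵢ)² and G₂=y₂²+y₃²+(1/(α₂−α₁))·Σ_{i∈{0,1},k∈{2,3}}(xᵢy_k−x_kyᵢ)². Then (i) 2H=G₁+G₂ identically on ℝ⁴×ℝ⁴, and (ii) for every (x,y) with C₁(x)=0 and C₂(x,y)=0 one has G₁/α₁+G₂/α₂−J₁²/α₁²−J₂²/α₂²=0, where J₁=x₀y₁−x₁y₀ and J₂=x₂y₃−x₃y₂. -/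
noncomputable section

/-- `G₁ = y₀² + y₁² + (1/(α₁−α₂))·Σ_{i∈{0,1},k∈{2,3}} (xᵢyₖ − xₖyᵢ)²`. -/
def Gint1 (α₁ α₂ : ℝ) (p : Pt 4) : ℝ :=
  (p.2 0)^2 + (p.2 1)^2 + (1/(α₁ - α₂)) *
    ((p.1 0 * p.2 2 - p.1 2 * p.2 0)^2 + (p.1 0 * p.2 3 - p.1 3 * p.2 0)^2 +
     (p.1 1 * p.2 2 - p.1 2 * p.2 1)^2 + (p.1 1 * p.2 3 - p.1 3 * p.2 1)^2)

/-- `G₂ = y₂² + y₃² + (1/(α₂−α₁))·Σ_{i∈{0,1},k∈{2,3}} (xᵢyₖ − xₖyᵢ)²`. -/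
def Gint2 (α₁ α₂ : ℝ) (p : Pt 4) : ℝ :=
  (p.2 2)^2 + (p.2 3)^2 + (1/(α₂ - α₁)) *
    ((p.1 0 * p.2 2 - p.1 2 * p.2 0)^2 + (p.1 0 * p.2 3 - p.1 3 * p.2 0)^2 +
     (p.1 1 * p.2 2 - p.1 2 * p.2 1)^2 + (p.1 1 * p.2 3 - p.1 3 * p.2 1)^2)

/-- `2H = G₁ + G₂` identically, and on `C₁ = C₂ = 0` one has
`G₁/α₁ + G₂/α₂ − J₁²/α₁² − J₂²/α₂² = 0`. -/
theorem stmt2 (α₁ α₂ : ℝ) (hα₁ : 0 < α₁) (hα₁₂ : α₁ < α₂) :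
    (∀ p : Pt 4, 2 * H4 p = Gint1 α₁ α₂ p + Gint2 α₁ α₂ p) ∧
    (∀ p : Pt 4, C1 ![α₁, α₁, α₂, α₂] p.1 = 0 → C2 ![α₁, α₁, α₂, α₂] p = 0 →
      Gint1 α₁ α₂ p / α₁ + Gint2 α₁ α₂ p / α₂
        - (Jmom1 p)^2 / α₁^2 - (Jmom2 p)^2 / α₂^2 = 0) := by
  
  have ha1 : α₁ ≠ 0 := ne_of_gt hα₁
  have ha2 : α₂ ≠ 0 := by intro h; linarith
  have h12 : α₁ - α₂ ≠ 0 := by intro h; linarith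
  have h21 : α₂ - α₁ ≠ 0 := by intro h; linarith
  constructor
  · intro p
    simp only [H4, Gint1, Gint2]
    field_simp
    ring
  · intro p h1 h2
    simp only [C1, C2, Fin.sum_univ_four, Matrix.cons_val_zero, Matrix.cons_val_one,
      Matrix.head_cons, Matrix.cons_val_two, Matrix.tail_cons, Matrix.cons_val_three] at h1 h2
    simp only [Gint1, Gint2, Jmom1, Jmom2]
    set x0 := p.1 0; set x1 := p.1 1; set x2 := p.1 2; set x3 := p.1 3
    set y0 := p.2 0; set y1 := p.2 1; set y2 := p.2 2; set y3 := p.2 3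
    have key :
        (y0^2 + y1^2 + (1/(α₁ - α₂)) *
          ((x0*y2 - x2*y0)^2 + (x0*y3 - x3*y0)^2 + (x1*y2 - x2*y1)^2 + (x1*y3 - x3*y1)^2)) / α₁
        + (y2^2 + y3^2 + (1/(α₂ - α₁)) *
          ((x0*y2 - x2*y0)^2 + (x0*y3 - x3*y0)^2 + (x1*y2 - x2*y1)^2 + (x1*y3 - x3*y1)^2)) / α₂
        - (x0*y1 - x1*y0)^2 / α₁^2 - (x2*y3 - x3*y2)^2 / α₂^2
        = (x0*y0/α₁ + x1*y1/α₁ + x2*y2/α₂ + x3*y3/α₂)^2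
          - ((y0^2 + y1^2)/α₁ + (y2^2 + y3^2)/α₂)
            * (x0^2/α₁ + x1^2/α₁ + x2^2/α₂ + x3^2/α₂ - 1) := by
      field_simp
      ring
    linear_combination key
      + (x0*y0/α₁ + x1*y1/α₁ + x2*y2/α₂ + x3*y3/α₂) * h2
      - ((y0^2 + y1^2)/α₁ + (y2^2 + y3^2)/α₂) * h1
end
end

section
/- Let 0<α₁<α₂, h>0, and take parameters (α₀,α₁,α₂,α₃)=(α₁,α₁,α₂,α₂). Let E_h={(x,y)∈ℝ⁴×ℝ⁴ : C₁(x)=0, C₂(x,y)=0, H(x,y)=h}. Then the image of E_h under the map (x,y)↦(J₁(x,y),J₂(x,y)), where J₁=x₀y₁−x₁y₀ and J₂=x₂y₃−x₃y₂, equals the convex polygon {(j₁,j₂)∈ℝ² : |j₁|/√α₁+|j₂|/√α₂ ≤ √(2h)}. -/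
/-!
Let `rₖ`, `ρₖ` be the lengths of the position and velocity components of a point in the `k`-th
coordinate plane. Lagrange's identity gives `|Jₖ| ≤ rₖ ρₖ`, and Cauchy–Schwarz together with
`r₁²/α₁ + r₂²/α₂ = 1` (that is, `C₁ = 0`) and `ρ₁² + ρ₂² = 2H` gives
`|J₁|/√α₁ + |J₂|/√α₂ ≤ √(2h)`.

Conversely, every such `j` is attained at a point with `x = (x₀, 0, x₂, 0)`: taking
`x₀²/α₁ : x₂²/α₂ = |j₁|/√α₁ : |j₂|/√α₂` realises `j` with `y₁² + y₃² ≤ 2h`, and the remaining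
energy is put into `(y₀, y₂)` orthogonally to `(x₀/α₁, x₂/α₂)`, which keeps `C₂ = 0`.
-/

noncomputable section

open Real

theorem abs_mul_sub_mul_le_sqrt_mul_sqrt (a b c d : ℝ) :
    |a * d - b * c| ≤ √(a ^ 2 + b ^ 2) * √(c ^ 2 + d ^ 2) := by
  rw [← sqrt_mul (by positivity)]
  exact abs_le_sqrt (by nlinarith [sq_nonneg (a * c + b * d)])

theorem mul_add_mul_le_sqrt_mul_sqrt (a b c d : ℝ) :
    a * b + c * d ≤ √(a ^ 2 + c ^ 2) * √(b ^ 2 + d ^ 2) := by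
  rw [← sqrt_mul (by positivity)]
  exact (le_abs_self _).trans (abs_le_sqrt (by nlinarith [sq_nonneg (a * d - b * c)]))

theorem exists_orthogonal_sq_add_sq_eq {w₁ w₂ R : ℝ} (hw : 0 < w₁ ^ 2 + w₂ ^ 2) (hR : 0 ≤ R) :
    ∃ v₁ v₂ : ℝ, w₁ * v₁ + w₂ * v₂ = 0 ∧ v₁ ^ 2 + v₂ ^ 2 = R := by
  refine ⟨-√(R / (w₁ ^ 2 + w₂ ^ 2)) * w₂, √(R / (w₁ ^ 2 + w₂ ^ 2)) * w₁, by ring, ?_⟩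
  have hκ : √(R / (w₁ ^ 2 + w₂ ^ 2)) ^ 2 = R / (w₁ ^ 2 + w₂ ^ 2) := sq_sqrt (by positivity)
  linear_combination (w₁ ^ 2 + w₂ ^ 2) * hκ + (div_mul_cancel₀ R hw.ne')

theorem exists_unit_mul_eq_of_abs_add_abs_le {a b S : ℝ} (h : |a| + |b| ≤ S) :
    ∃ t u z₁ z₃ : ℝ, t ^ 2 + u ^ 2 = 1 ∧ z₁ ^ 2 + z₃ ^ 2 ≤ S ^ 2 ∧ t * z₁ = a ∧ u * z₃ = b := by
  set c := |a| + |b|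
  rcases (show 0 ≤ c by positivity).eq_or_lt with hc | hc
  · have ha : a = 0 := abs_eq_zero.mp (by linarith [abs_nonneg a, abs_nonneg b])
    have hb : b = 0 := abs_eq_zero.mp (by linarith [abs_nonneg a, abs_nonneg b])
    exact ⟨1, 0, 0, 0, by norm_num, by simp [sq_nonneg], by simp [ha], by simp [hb]⟩
  have sign_sq_le (r : ℝ) : (SignType.sign r : ℝ) ^ 2 ≤ 1 := by
    rcases lt_trichotomy r 0 with hr | hr | hr <;> simp [hr]
  have ht : √(|a| / c) ^ 2 = |a| / c := sq_sqrt (by positivity)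
  have hu : √(|b| / c) ^ 2 = |b| / c := sq_sqrt (by positivity)
  refine ⟨√(|a| / c), √(|b| / c), SignType.sign a * c * √(|a| / c),
    SignType.sign b * c * √(|b| / c), ?_, ?_, ?_, ?_⟩
  · rw [ht, hu, ← add_div, div_self hc.ne']
  · calc _ ≤ c ^ 2 * (√(|a| / c) ^ 2 + √(|b| / c) ^ 2) := by
          nlinarith [sign_sq_le a, sign_sq_le b, sq_nonneg (c * √(|a| / c)),
            sq_nonneg (c * √(|b| / c))]
      _ = c ^ 2 := by rw [ht, hu, ← add_div, div_self hc.ne', mul_one]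
      _ ≤ S ^ 2 := pow_le_pow_left₀ hc.le h 2
  · calc _ = SignType.sign a * (c * √(|a| / c) ^ 2) := by ring
      _ = a := by rw [ht, mul_div_cancel₀ _ hc.ne', sign_mul_abs]
  · calc _ = SignType.sign b * (c * √(|b| / c) ^ 2) := by ring
      _ = b := by rw [hu, mul_div_cancel₀ _ hc.ne', sign_mul_abs]

theorem abs_Jmom1_div_add_abs_Jmom2_div_le {α₁ α₂ : ℝ} (hα₁ : 0 ≤ α₁) (hα₂ : 0 ≤ α₂) {p : Pt 4}
    (hp : C1 ![α₁, α₁, α₂, α₂] p.1 = 0) :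
    |Jmom1 p| / √α₁ + |Jmom2 p| / √α₂ ≤ √(2 * H4 p) := by
  obtain ⟨x, y⟩ := p
  have hx : (√(x 0 ^ 2 + x 1 ^ 2) / √α₁) ^ 2 + (√(x 2 ^ 2 + x 3 ^ 2) / √α₂) ^ 2 = 1 := by
    simp only [C1, Fin.sum_univ_four, Matrix.cons_val_zero, Matrix.cons_val_one,
      Matrix.cons_val] at hp
    simp only [div_pow, sq_sqrt hα₁, sq_sqrt hα₂, sq_sqrt (by positivity : 0 ≤ x 0 ^ 2 + x 1 ^ 2),
      sq_sqrt (by positivity : 0 ≤ x 2 ^ 2 + x 3 ^ 2)]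
    linear_combination hp
  calc |Jmom1 (x, y)| / √α₁ + |Jmom2 (x, y)| / √α₂
      ≤ √(x 0 ^ 2 + x 1 ^ 2) * √(y 0 ^ 2 + y 1 ^ 2) / √α₁
        + √(x 2 ^ 2 + x 3 ^ 2) * √(y 2 ^ 2 + y 3 ^ 2) / √α₂ := by
        gcongr
        · exact abs_mul_sub_mul_le_sqrt_mul_sqrt _ _ _ _
        · exact abs_mul_sub_mul_le_sqrt_mul_sqrt _ _ _ _
    _ = √(x 0 ^ 2 + x 1 ^ 2) / √α₁ * √(y 0 ^ 2 + y 1 ^ 2)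
        + √(x 2 ^ 2 + x 3 ^ 2) / √α₂ * √(y 2 ^ 2 + y 3 ^ 2) := by ring
    _ ≤ √((√(x 0 ^ 2 + x 1 ^ 2) / √α₁) ^ 2 + (√(x 2 ^ 2 + x 3 ^ 2) / √α₂) ^ 2)
        * √(√(y 0 ^ 2 + y 1 ^ 2) ^ 2 + √(y 2 ^ 2 + y 3 ^ 2) ^ 2) :=
        mul_add_mul_le_sqrt_mul_sqrt _ _ _ _
    _ = √(2 * H4 (x, y)) := by
        rw [hx, sqrt_one, one_mul, sq_sqrt (by positivity), sq_sqrt (by positivity), H4]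
        ring_nf

theorem exists_mem_energySurface_Jmom_eq {α₁ α₂ h x₀ x₂ y₁ y₃ : ℝ}
    (hx : x₀ ^ 2 / α₁ + x₂ ^ 2 / α₂ = 1) (hy : y₁ ^ 2 + y₃ ^ 2 ≤ 2 * h) :
    ∃ p : Pt 4, (C1 ![α₁, α₁, α₂, α₂] p.1 = 0 ∧ C2 ![α₁, α₁, α₂, α₂] p = 0 ∧ H4 p = h) ∧
      (Jmom1 p, Jmom2 p) = (x₀ * y₁, x₂ * y₃) := by
  have hw : 0 < (x₀ / α₁) ^ 2 + (x₂ / α₂) ^ 2 := by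
    by_contra! hw
    have h₀ : x₀ / α₁ = 0 := by nlinarith [sq_nonneg (x₀ / α₁), sq_nonneg (x₂ / α₂)]
    have h₂ : x₂ / α₂ = 0 := by nlinarith [sq_nonneg (x₀ / α₁), sq_nonneg (x₂ / α₂)]
    have hx' : x₀ * (x₀ / α₁) + x₂ * (x₂ / α₂) = 1 := by rw [← hx]; ring
    rw [h₀, h₂] at hx'
    norm_num at hx'
  obtain ⟨y₀, y₂, hC2, hH⟩ := exists_orthogonal_sq_add_sq_eq hw (sub_nonneg.mpr hy)
  refine ⟨(![x₀, 0, x₂, 0], ![y₀, y₁, y₂, y₃]), ⟨?_, ?_, ?_⟩, by simp [Jmom1, Jmom2]⟩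
  · simp [C1, Fin.sum_univ_four, hx]
  · simp only [C2, Fin.sum_univ_four, Matrix.cons_val_zero, Matrix.cons_val_one, Matrix.cons_val,
      zero_mul, zero_div, add_zero]
    linear_combination hC2
  · simp only [H4, Matrix.cons_val_zero, Matrix.cons_val_one, Matrix.cons_val]
    linear_combination hH / 2

/-- the image of the energy surface `E_h` under the momentum map `(J₁,J₂)`
is the convex polygon `|j₁|/√α₁ + |j₂|/√α₂ ≤ √(2h)`. -/
theorem stmt4 (α₁ α₂ h : ℝ) (hα₁ : 0 < α₁) (hα₁₂ : α₁ < α₂) (hh : 0 < h) :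
    (fun p : Pt 4 => (Jmom1 p, Jmom2 p)) ''
      {p : Pt 4 | C1 ![α₁, α₁, α₂, α₂] p.1 = 0 ∧ C2 ![α₁, α₁, α₂, α₂] p = 0 ∧ H4 p = h}
    = {j : ℝ × ℝ | |j.1| / Real.sqrt α₁ + |j.2| / Real.sqrt α₂ ≤ Real.sqrt (2 * h)} := by
  have hα₂ : 0 < α₂ := hα₁.trans hα₁₂
  ext j
  constructor
  · rintro ⟨p, ⟨hC1, -, rfl⟩, rfl⟩
    exact abs_Jmom1_div_add_abs_Jmom2_div_le hα₁.le hα₂.le hC1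
  · intro (hj : |j.1| / √α₁ + |j.2| / √α₂ ≤ √(2 * h))
    have hs₁ : 0 < √α₁ := sqrt_pos.mpr hα₁
    have hs₂ : 0 < √α₂ := sqrt_pos.mpr hα₂
    obtain ⟨t, u, z₁, z₃, htu, hz, ht, hu⟩ :=
      exists_unit_mul_eq_of_abs_add_abs_le (a := j.1 / √α₁) (b := j.2 / √α₂)
        (by simpa only [abs_div, abs_of_pos hs₁, abs_of_pos hs₂] using hj)
    have hx : (√α₁ * t) ^ 2 / α₁ + (√α₂ * u) ^ 2 / α₂ = 1 := by
      rw [mul_pow, mul_pow, sq_sqrt hα₁.le, sq_sqrt hα₂.le, mul_div_cancel_left₀ _ hα₁.ne',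
        mul_div_cancel_left₀ _ hα₂.ne', htu]
    obtain ⟨p, hp, hJ⟩ := exists_mem_energySurface_Jmom_eq hx
      (hz.trans_eq (sq_sqrt (by positivity)))
    refine ⟨p, hp, hJ.trans ?_⟩
    rw [mul_assoc, mul_assoc, ht, hu, mul_div_cancel₀ _ hs₁.ne', mul_div_cancel₀ _ hs₂.ne']
end
end

section
/- Let 0<α₁ and 0<α₂ and take parameters (α₀,α₁,α₂,α₃)=(α₁,α₁,α₂,α₂). For every (x,y)∈ℝ⁴×ℝ⁴ with C₁(x)=0, one has |x₀y₁−x₁y₀|/√α₁+|x₂y₃−x₃y₂|/√α₂ ≤ √(2H(x,y)), where H=½(y₀²+y₁²+y₂²+y₃²). -/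
noncomputable section

lemma sqrt_cauchy_aux (a b s t : ℝ) (ha : 0 ≤ a) (hb : 0 ≤ b) (hs : 0 ≤ s)
    (ht : 0 ≤ t) (hab : a + b = 1) :
    Real.sqrt (a * s) + Real.sqrt (b * t) ≤ Real.sqrt (s + t) := by
  rw [show s + t = (a + b) * (s + t) by rw [hab]; ring]
  rw [← Real.sqrt_sq (by positivity : (0:ℝ) ≤ Real.sqrt (a*s) + Real.sqrt (b*t))]
  apply Real.sqrt_le_sqrt
  have e1 : Real.sqrt (a*s) ^ 2 = a * s := Real.sq_sqrt (by positivity)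
  have e2 : Real.sqrt (b*t) ^ 2 = b * t := Real.sq_sqrt (by positivity)
  have e3 : Real.sqrt (a*s) * Real.sqrt (b*t) = Real.sqrt (a*s*(b*t)) :=
    (Real.sqrt_mul (by positivity) _).symm
  have e4 : Real.sqrt (a*s*(b*t)) ^ 2 = a*s*(b*t) := Real.sq_sqrt (by positivity)
  have e5 : (0:ℝ) ≤ Real.sqrt (a*s*(b*t)) := Real.sqrt_nonneg _
  nlinarith [sq_nonneg (Real.sqrt (a*s*(b*t)) * 2 - (a*t + b*s)),
    mul_nonneg ha ht, mul_nonneg hb hs, sq_nonneg (a*t - b*s)]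

lemma abs_div_sqrt_aux (u v y z c : ℝ) (hc : 0 < c) :
    |u * z - v * y| / Real.sqrt c ≤
      Real.sqrt ((u^2 + v^2)/c * (y^2 + z^2)) := by
  rw [show |u * z - v * y| / Real.sqrt c
      = Real.sqrt ((u * z - v * y)^2 / c) from by
    rw [Real.sqrt_div (sq_nonneg _), Real.sqrt_sq_eq_abs]]
  apply Real.sqrt_le_sqrt
  rw [div_mul_eq_mul_div]
  gcongr
  nlinarith [sq_nonneg (u * y + v * z)]

/-- on `C₁ = 0`, `|x₀y₁−x₁y₀|/√α₁ + |x₂y₃−x₃y₂|/√α₂ ≤ √(2H)`. -/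
theorem stmt5 (α₁ α₂ : ℝ) (hα₁ : 0 < α₁) (hα₂ : 0 < α₂) (p : Pt 4)
    (hC1 : C1 ![α₁, α₁, α₂, α₂] p.1 = 0) :
    |p.1 0 * p.2 1 - p.1 1 * p.2 0| / Real.sqrt α₁ +
      |p.1 2 * p.2 3 - p.1 3 * p.2 2| / Real.sqrt α₂ ≤ Real.sqrt (2 * H4 p) := by
  have hC : (p.1 0)^2/α₁ + (p.1 1)^2/α₁ + (p.1 2)^2/α₂ + (p.1 3)^2/α₂ = 1 := by
    have h := hC1
    simp [C1, Fin.sum_univ_four] at h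
    linarith
  have h2H : 2 * H4 p = ((p.2 0)^2 + (p.2 1)^2) + ((p.2 2)^2 + (p.2 3)^2) := by
    simp [H4]; ring
  rw [h2H]
  have k1 := abs_div_sqrt_aux (p.1 0) (p.1 1) (p.2 0) (p.2 1) α₁ hα₁
  have k2 := abs_div_sqrt_aux (p.1 2) (p.1 3) (p.2 2) (p.2 3) α₂ hα₂
  have k3 := sqrt_cauchy_aux (((p.1 0)^2 + (p.1 1)^2)/α₁) (((p.1 2)^2 + (p.1 3)^2)/α₂)
    ((p.2 0)^2 + (p.2 1)^2) ((p.2 2)^2 + (p.2 3)^2)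
    (by positivity) (by positivity) (by positivity) (by positivity)
    (by rw [← hC]; ring)
  linarith
end
end

section
/- Let 0<α₁<α₂, h>0, and take parameters (α₀,α₁,α₂,α₃)=(α₁,α₁,α₂,α₂). Then the set {(x,y)∈ℝ⁴×ℝ⁴ : C₁(x)=0, C₂(x,y)=0, H(x,y)=h, J₁(x,y)=√(2α₁h), J₂(x,y)=0} equals the circle {((√α₁·cosθ, √α₁·sinθ, 0, 0), (−√(2h)·sinθ, √(2h)·cosθ, 0, 0)) : θ∈ℝ}, where H=½(y₀²+y₁²+y₂²+y₃²), J₁=x₀y₁−x₁y₀, J₂=x₂y₃−x₃y₂. -/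
noncomputable section

/-!
On the fiber, `C₁ = 0` and `H = h` give `x₀² + x₁² ≤ α₁` and `y₀² + y₁² ≤ 2h`, with equality
only if `x₂ = x₃ = 0`, resp. `y₂ = y₃ = 0`. By Lagrange's identity
`(x₀y₁ − x₁y₀)² + (x₀y₀ + x₁y₁)² = (x₀² + x₁²)(y₀² + y₁²) ≤ 2α₁h`, so `J₁ = √(2α₁h)` forces
equality everywhere: both vectors lie in the `(0,1)`-plane, `|x| = √α₁`, `|y| = √(2h)` and
`x ⊥ y`, with `y` a positive quarter turn of `x` (rescaled). Polar coordinates for `x` give the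
circle.
-/

open Real

lemma sq_add_sq_le_and_eq_zero_of_add_mul_eq {a b c d μ r : ℝ} (hμ : 0 < μ)
    (h : a ^ 2 + b ^ 2 + μ * (c ^ 2 + d ^ 2) = r) :
    a ^ 2 + b ^ 2 ≤ r ∧ (a ^ 2 + b ^ 2 = r → c = 0 ∧ d = 0) := by
  refine ⟨by nlinarith [sq_nonneg c, sq_nonneg d], fun hab => ?_⟩
  have hcd : c ^ 2 + d ^ 2 = 0 :=
    (mul_eq_zero.mp (by linarith : μ * (c ^ 2 + d ^ 2) = 0)).resolve_left hμ.ne'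
  exact mul_self_add_mul_self_eq_zero.mp (by simpa only [sq] using hcd)

lemma eq_and_dot_eq_zero_of_cross_sq_eq_mul {a b e f r s : ℝ} (hr : 0 < r) (hs : 0 < s)
    (hab : a ^ 2 + b ^ 2 ≤ r) (hef : e ^ 2 + f ^ 2 ≤ s) (hcross : (a * f - b * e) ^ 2 = r * s) :
    a ^ 2 + b ^ 2 = r ∧ e ^ 2 + f ^ 2 = s ∧ a * e + b * f = 0 := by
  have lagrange : (a * e + b * f) ^ 2 + (a * f - b * e) ^ 2 =
      (a ^ 2 + b ^ 2) * (e ^ 2 + f ^ 2) := by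
    ring
  have hprod : (a ^ 2 + b ^ 2) * (e ^ 2 + f ^ 2) ≤ r * s :=
    mul_le_mul hab hef (by positivity) hr.le
  have hdot : (a * e + b * f) ^ 2 = 0 := by nlinarith [sq_nonneg (a * e + b * f)]
  have hprod_eq : (a ^ 2 + b ^ 2) * (e ^ 2 + f ^ 2) = r * s := by linarith
  refine ⟨?_, ?_, pow_eq_zero_iff two_ne_zero |>.mp hdot⟩
  · nlinarith [sq_nonneg e, sq_nonneg f]
  · nlinarith [sq_nonneg a, sq_nonneg b]

lemma exists_eq_mul_cos_and_eq_mul_sin {a b r : ℝ} (hr : 0 ≤ r) (h : a ^ 2 + b ^ 2 = r ^ 2) :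
    ∃ θ, a = r * cos θ ∧ b = r * sin θ := by
  set z : ℂ := a + b * Complex.I
  have hz : ‖z‖ = r := by
    refine (pow_left_inj₀ (norm_nonneg z) hr two_ne_zero).mp ?_
    rw [Complex.sq_norm, Complex.normSq_add_mul_I, h]
  refine ⟨Complex.arg z, ?_, ?_⟩
  · rw [← hz, Complex.norm_mul_cos_arg]; simp [z]
  · rw [← hz, Complex.norm_mul_sin_arg]; simp [z]

lemma eq_neg_mul_sin_and_eq_mul_cos {r t θ e f : ℝ} (hr : r ≠ 0)
    (hdot : r * cos θ * e + r * sin θ * f = 0) (hcross : r * cos θ * f - r * sin θ * e = r * t) :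
    e = -(t * sin θ) ∧ f = t * cos θ := by
  have hdot' : cos θ * e + sin θ * f = 0 := by
    refine mul_left_cancel₀ hr ?_; linear_combination hdot
  have hcross' : cos θ * f - sin θ * e = t := by
    refine mul_left_cancel₀ hr ?_; linear_combination hcross
  constructor
  · linear_combination cos θ * hdot' - sin θ * hcross' - e * sin_sq_add_cos_sq θ
  · linear_combination sin θ * hdot' + cos θ * hcross' - f * sin_sq_add_cos_sq θ

/-- the fiber of the energy-momentum map over the corner
`(h, √(2α₁h), 0)` of the polygon is a single circle. -/
theorem stmt7 (α₁ α₂ h : ℝ) (hα₁ : 0 < α₁) (hα₁₂ : α₁ < α₂) (hh : 0 < h) :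
    {p : Pt 4 | C1 ![α₁, α₁, α₂, α₂] p.1 = 0 ∧ C2 ![α₁, α₁, α₂, α₂] p = 0 ∧
      H4 p = h ∧ Jmom1 p = Real.sqrt (2 * α₁ * h) ∧ Jmom2 p = 0}
    = {p : Pt 4 | ∃ θ : ℝ,
        p = (![Real.sqrt α₁ * Real.cos θ, Real.sqrt α₁ * Real.sin θ, 0, 0],
             ![-(Real.sqrt (2 * h) * Real.sin θ), Real.sqrt (2 * h) * Real.cos θ, 0, 0])} := by
  have hα₂ : 0 < α₂ := hα₁.trans hα₁₂
  have hsqrt : √(2 * α₁ * h) = √α₁ * √(2 * h) := by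
    rw [mul_comm 2 α₁, mul_assoc, sqrt_mul hα₁.le]
  ext ⟨x, y⟩
  simp only [Set.mem_ofPred_eq, C1, C2, H4, Jmom1, Jmom2, Fin.sum_univ_four, Prod.mk.injEq,
    funext_iff, Fin.forall_fin_succ, IsEmpty.forall_iff, and_true, Fin.succ_zero_eq_one,
    Fin.succ_one_eq_two, Fin.reduceSucc, Matrix.cons_val_zero, Matrix.cons_val_one,
    Matrix.cons_val_two, Matrix.cons_val_three, Matrix.head_cons, Matrix.tail_cons,
    Matrix.cons_val_succ]
  constructor
  · rintro ⟨hC1, -, hH, hJ1, -⟩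
    have hx : x 0 ^ 2 + x 1 ^ 2 + α₁ / α₂ * (x 2 ^ 2 + x 3 ^ 2) = α₁ := by
      field_simp at hC1 ⊢; linear_combination hC1
    have hy : y 0 ^ 2 + y 1 ^ 2 + 1 * (y 2 ^ 2 + y 3 ^ 2) = 2 * h := by
      linear_combination 2 * hH
    obtain ⟨hx01, hx23⟩ := sq_add_sq_le_and_eq_zero_of_add_mul_eq (by positivity) hx
    obtain ⟨hy01, hy23⟩ := sq_add_sq_le_and_eq_zero_of_add_mul_eq one_pos hy
    have hcross : (x 0 * y 1 - x 1 * y 0) ^ 2 = α₁ * (2 * h) := by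
      rw [hJ1, sq_sqrt (by positivity)]; ring
    obtain ⟨hxn, hyn, hdot⟩ :=
      eq_and_dot_eq_zero_of_cross_sq_eq_mul hα₁ (by positivity) hx01 hy01 hcross
    obtain ⟨θ, hx0, hx1⟩ :=
      exists_eq_mul_cos_and_eq_mul_sin (sqrt_nonneg α₁) (hxn.trans (sq_sqrt hα₁.le).symm)
    rw [hx0, hx1] at hdot
    rw [hx0, hx1, hsqrt] at hJ1
    obtain ⟨hy0, hy1⟩ := eq_neg_mul_sin_and_eq_mul_cos (sqrt_pos.2 hα₁).ne' hdot hJ1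
    exact ⟨θ, ⟨hx0, hx1, hx23 hxn⟩, hy0, hy1, hy23 hyn⟩
  · rintro ⟨θ, ⟨hx0, hx1, hx2, hx3⟩, hy0, hy1, hy2, hy3⟩
    rw [hx0, hx1, hx2, hx3, hy0, hy1, hy2, hy3, hsqrt]
    have hcs := sin_sq_add_cos_sq θ
    refine ⟨?_, by ring, ?_, by linear_combination √α₁ * √(2 * h) * hcs, by ring⟩
    · rw [mul_pow, mul_pow, sq_sqrt hα₁.le]
      field_simp
      linear_combination α₂ * hcs
    · have h2h : √(2 * h) ^ 2 = 2 * h := sq_sqrt (by positivity)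
      linear_combination h * hcs + (sin θ ^ 2 + cos θ ^ 2) / 2 * h2h
end
end

section
/- Let 0<α₁<α₂, h>0, and take parameters (α₀,α₁,α₂,α₃)=(α₁,α₁,α₂,α₂). Let j₁>0, j₂>0 satisfy j₁/√α₁+j₂/√α₂=√(2h). Put s=1−j₂/√(2hα₂) (so 0<s<1), a=√(α₁s), c=√(2hs), b=(α₂/(2h))^{1/4}√j₂, d=(2h/α₂)^{1/4}√j₂. Then the set {(x,y)∈ℝ⁴×ℝ⁴ : C₁(x)=0, C₂(x,y)=0, H(x,y)=h, J₁(x,y)=j₁, J₂(x,y)=j₂} equals the two-torus {((a·cosθ₁, a·sinθ₁, b·cosθ₂, b·sinθ₂), (−c·sinθ₁, c·cosθ₁, −d·sinθ₂, d·cosθ₂)) : θ₁,θ₂∈ℝ}, where H=½(y₀²+y₁²+y₂²+y₃²), J₁=x₀y₁−x₁y₀, J₂=x₂y₃−x₃y₂. -/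
noncomputable section

/-!
Write `X = (x₀² + x₁²)/α₁` and `q = (y₀² + y₁²)/(2h)`; the constraint `C₁ = 0` and the energy
then give `1 - X` and `1 - q` for the second coordinate plane. On the edge, `j₁ = √α₁ √(2h) s` and
`j₂ = √α₂ √(2h) (1 - s)`, so the Lagrange identity `(x ∧ y)² ≤ |x|² |y|²` in each plane yields
`s² ≤ X q` and `(1 - s)² ≤ (1 - X)(1 - q)`. By Cauchy–Schwarz `√(X q) + √((1 - X)(1 - q)) ≤ 1`,
so both are equalities and `X = q = s`: the four radii are forced. Finally, in each plane a pair
of vectors of lengths `a`, `c` with oriented area `a c` is a rotated copy of `(a, 0), (0, c)`.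
-/

open Real

lemma exists_angle_of_cross_eq_mul {a c x₀ x₁ y₀ y₁ : ℝ} (ha : 0 < a)
    (hx : x₀ ^ 2 + x₁ ^ 2 = a ^ 2) (hy : y₀ ^ 2 + y₁ ^ 2 = c ^ 2)
    (hcross : x₀ * y₁ - x₁ * y₀ = a * c) :
    ∃ θ, x₀ = a * cos θ ∧ x₁ = a * sin θ ∧ y₀ = -(c * sin θ) ∧ y₁ = c * cos θ := by
  have hdot : x₀ * y₀ + x₁ * y₁ = 0 := by
    apply pow_eq_zero_iff two_ne_zero |>.mp
    linear_combination (y₀ ^ 2 + y₁ ^ 2) * hx + a ^ 2 * hy - (x₀ * y₁ - x₁ * y₀ + a * c) * hcross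
  obtain ⟨θ, rfl, rfl⟩ : ∃ θ, x₀ = a * cos θ ∧ x₁ = a * sin θ := by
    have hz : ‖(⟨x₀, x₁⟩ : ℂ)‖ = a := by
      rw [← sq_eq_sq₀ (norm_nonneg _) ha.le, Complex.sq_norm, Complex.normSq_mk, ← hx]
      ring
    exact ⟨Complex.arg ⟨x₀, x₁⟩, by rw [← hz, Complex.norm_mul_cos_arg],
      by rw [← hz, Complex.norm_mul_sin_arg]⟩
  have hθ := sin_sq_add_cos_sq θ
  refine ⟨θ, rfl, rfl, mul_left_cancel₀ ha.ne' ?_, mul_left_cancel₀ ha.ne' ?_⟩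
  · linear_combination cos θ * hdot - sin θ * hcross - a * y₀ * hθ
  · linear_combination sin θ * hdot + cos θ * hcross - a * y₁ * hθ

lemma eq_of_sq_le_mul_of_one_sub_sq_le {X p s : ℝ} (hX₀ : 0 ≤ X) (hX₁ : X ≤ 1)
    (hp₀ : 0 ≤ p) (hp₁ : p ≤ 1) (h₁ : s ^ 2 ≤ X * p) (h₂ : (1 - s) ^ 2 ≤ (1 - X) * (1 - p)) :
    X = s ∧ p = s := by
  have hprod : (s * (1 - s)) ^ 2 ≤ X * p * ((1 - X) * (1 - p)) := by
    rw [mul_pow]; exact mul_le_mul h₁ h₂ (sq_nonneg _) (by nlinarith)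
  have hamgm : 2 * (s * (1 - s)) ≤ X * (1 - p) + p * (1 - X) := by
    apply abs_le_of_sq_le_sq' _ (by nlinarith) |>.2
    nlinarith [sq_nonneg (X * (1 - p) - p * (1 - X))]
  have hXp : X = p := by
    nlinarith [sq_nonneg (X * (1 - p) - p * (1 - X))]
  subst hXp
  have : s ≤ X := abs_le_of_sq_le_sq' (by nlinarith) hX₀ |>.2
  have : 1 - s ≤ 1 - X := abs_le_of_sq_le_sq' (by nlinarith) (by linarith) |>.2
  constructor <;> linarith

lemma sq_cross_le (x₀ x₁ y₀ y₁ : ℝ) :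
    (x₀ * y₁ - x₁ * y₀) ^ 2 ≤ (x₀ ^ 2 + x₁ ^ 2) * (y₀ ^ 2 + y₁ ^ 2) := by
  nlinarith [sq_nonneg (x₀ * y₀ + x₁ * y₁)]

lemma sq_rpow_quarter_mul_sqrt {x j : ℝ} (hx : 0 ≤ x) (hj : 0 ≤ j) :
    (x ^ (1 / 4 : ℝ) * √j) ^ 2 = √x * j := by
  rw [mul_pow, sq_sqrt hj, ← rpow_natCast, ← rpow_mul hx, sqrt_eq_rpow]
  norm_num

lemma rpow_quarter_mul_sqrt_mul_inv {x j : ℝ} (hx : 0 < x) (hj : 0 ≤ j) :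
    x ^ (1 / 4 : ℝ) * √j * (x⁻¹ ^ (1 / 4 : ℝ) * √j) = j := by
  rw [inv_rpow hx.le, mul_mul_mul_comm, mul_inv_cancel₀ (by positivity), one_mul,
    mul_self_sqrt hj]

def energyMomentumFiber (α : Fin 4 → ℝ) (h j₁ j₂ : ℝ) : Set (Pt 4) :=
  {p | C1 α p.1 = 0 ∧ C2 α p = 0 ∧ H4 p = h ∧ Jmom1 p = j₁ ∧ Jmom2 p = j₂}

def torusPoint (a b c d θ₁ θ₂ : ℝ) : Pt 4 :=
  (![a * cos θ₁, a * sin θ₁, b * cos θ₂, b * sin θ₂],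
   ![-(c * sin θ₁), c * cos θ₁, -(d * sin θ₂), d * cos θ₂])

section Fiber

variable {α₁ α₂ h s a b c d : ℝ}

lemma sq_radii_of_mem_energyMomentumFiber {p : Pt 4} (hα₁ : 0 < α₁) (hα₂ : 0 < α₂) (hh : 0 < h)
    (ha2 : a ^ 2 = α₁ * s) (hb2 : b ^ 2 = α₂ * (1 - s))
    (hc2 : c ^ 2 = 2 * h * s) (hd2 : d ^ 2 = 2 * h * (1 - s))
    (hp : p ∈ energyMomentumFiber ![α₁, α₁, α₂, α₂] h (a * c) (b * d)) :
    p.1 0 ^ 2 + p.1 1 ^ 2 = a ^ 2 ∧ p.2 0 ^ 2 + p.2 1 ^ 2 = c ^ 2 ∧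
      p.1 2 ^ 2 + p.1 3 ^ 2 = b ^ 2 ∧ p.2 2 ^ 2 + p.2 3 ^ 2 = d ^ 2 := by
  obtain ⟨hC1, -, hH, hJ₁, hJ₂⟩ := hp
  simp only [C1, H4, Jmom1, Jmom2, Fin.sum_univ_four, Matrix.cons_val_zero, Matrix.cons_val_one,
    Matrix.cons_val_two, Matrix.cons_val_three, Matrix.head_cons, Matrix.tail_cons]
    at hC1 hH hJ₁ hJ₂
  set X := (p.1 0 ^ 2 + p.1 1 ^ 2) / α₁ with hX
  set q := (p.2 0 ^ 2 + p.2 1 ^ 2) / (2 * h) with hq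
  have hX' : 1 - X = (p.1 2 ^ 2 + p.1 3 ^ 2) / α₂ := by
    rw [hX]; linear_combination -hC1
  have hq' : 1 - q = (p.2 2 ^ 2 + p.2 3 ^ 2) / (2 * h) := by
    rw [hq]; field_simp; linarith
  have h₁ : s ^ 2 ≤ X * q := by
    have := sq_cross_le (p.1 0) (p.1 1) (p.2 0) (p.2 1)
    rw [hJ₁, mul_pow, ha2, hc2] at this
    rw [hX, hq, div_mul_div_comm, le_div_iff₀ (by positivity)]
    linear_combination this
  have h₂ : (1 - s) ^ 2 ≤ (1 - X) * (1 - q) := by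
    have := sq_cross_le (p.1 2) (p.1 3) (p.2 2) (p.2 3)
    rw [hJ₂, mul_pow, hb2, hd2] at this
    rw [hX', hq', div_mul_div_comm, le_div_iff₀ (by positivity)]
    linear_combination this
  obtain ⟨hXs, hqs⟩ := eq_of_sq_le_mul_of_one_sub_sq_le (by positivity)
    (by rw [← sub_nonneg, hX']; positivity) (by positivity)
    (by rw [← sub_nonneg, hq']; positivity) h₁ h₂
  rw [hXs] at hX hX'
  rw [hqs] at hq hq'
  refine ⟨?_, ?_, ?_, ?_⟩
  · rw [ha2]; field_simp at hX; linarith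
  · rw [hc2]; field_simp at hq; linarith
  · rw [hb2]; field_simp at hX'; linarith
  · rw [hd2]; field_simp at hq'; linarith

lemma torusPoint_mem_energyMomentumFiber (θ₁ θ₂ : ℝ) (hα₁ : α₁ ≠ 0) (hα₂ : α₂ ≠ 0)
    (ha2 : a ^ 2 = α₁ * s) (hb2 : b ^ 2 = α₂ * (1 - s))
    (hc2 : c ^ 2 = 2 * h * s) (hd2 : d ^ 2 = 2 * h * (1 - s)) :
    torusPoint a b c d θ₁ θ₂ ∈ energyMomentumFiber ![α₁, α₁, α₂, α₂] h (a * c) (b * d) := by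
  have t₁ := sin_sq_add_cos_sq θ₁
  have t₂ := sin_sq_add_cos_sq θ₂
  simp only [energyMomentumFiber, torusPoint, C1, C2, H4, Jmom1, Jmom2, Set.mem_ofPred_eq,
    Fin.sum_univ_four, Matrix.cons_val_zero, Matrix.cons_val_one, Matrix.cons_val_two,
    Matrix.cons_val_three, Matrix.head_cons, Matrix.tail_cons]
  refine ⟨?_, by ring, ?_, by linear_combination a * c * t₁, by linear_combination b * d * t₂⟩
  · field_simp
    linear_combination α₂ * (cos θ₁ ^ 2 + sin θ₁ ^ 2) * ha2 + α₁ * (cos θ₂ ^ 2 + sin θ₂ ^ 2) * hb2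
      + α₁ * α₂ * (s * t₁ + (1 - s) * t₂)
  · linear_combination (1 / 2) * (sin θ₁ ^ 2 + cos θ₁ ^ 2) * hc2 +
      (1 / 2) * (sin θ₂ ^ 2 + cos θ₂ ^ 2) * hd2 + h * s * t₁ + h * (1 - s) * t₂

theorem energyMomentumFiber_eq_torus {j₁ j₂ : ℝ} (hα₁ : 0 < α₁) (hα₂ : 0 < α₂) (hh : 0 < h)
    (ha : 0 < a) (hb : 0 < b) (ha2 : a ^ 2 = α₁ * s) (hb2 : b ^ 2 = α₂ * (1 - s))
    (hc2 : c ^ 2 = 2 * h * s) (hd2 : d ^ 2 = 2 * h * (1 - s))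
    (hj₁ : a * c = j₁) (hj₂ : b * d = j₂) :
    energyMomentumFiber ![α₁, α₁, α₂, α₂] h j₁ j₂ =
      {p | ∃ θ₁ θ₂ : ℝ, p = torusPoint a b c d θ₁ θ₂} := by
  subst hj₁ hj₂
  ext p
  constructor
  · intro hp
    obtain ⟨hx₁, hy₁, hx₂, hy₂⟩ :=
      sq_radii_of_mem_energyMomentumFiber hα₁ hα₂ hh ha2 hb2 hc2 hd2 hp
    obtain ⟨θ₁, h₀, h₁, h₂, h₃⟩ := exists_angle_of_cross_eq_mul ha hx₁ hy₁ hp.2.2.2.1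
    obtain ⟨θ₂, h₄, h₅, h₆, h₇⟩ := exists_angle_of_cross_eq_mul hb hx₂ hy₂ hp.2.2.2.2
    refine ⟨θ₁, θ₂, Prod.ext (funext fun i ↦ ?_) (funext fun i ↦ ?_)⟩ <;>
      fin_cases i <;> assumption
  · rintro ⟨θ₁, θ₂, rfl⟩
    exact torusPoint_mem_energyMomentumFiber θ₁ θ₂ hα₁.ne' hα₂.ne' ha2 hb2 hc2 hd2

end Fiber

/-- the fiber of the energy-momentum map over an edge point
`(h, j₁, j₂)` with `j₁/√α₁ + j₂/√α₂ = √(2h)`, `j₁, j₂ > 0`, is a single 2-torus: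
the `SO(2)×SO(2)` orbit of an explicit point. Here `s = 1 − j₂/√(2hα₂)` satisfies
`0 < s < 1` and `a = √(α₁s)`, `c = √(2hs)`, `b = (α₂/2h)^{1/4}√j₂`,
`d = (2h/α₂)^{1/4}√j₂`. -/
theorem stmt8 (α₁ α₂ h j₁ j₂ : ℝ) (hα₁ : 0 < α₁) (hα₁₂ : α₁ < α₂) (hh : 0 < h)
    (hj₁ : 0 < j₁) (hj₂ : 0 < j₂)
    (hedge : j₁ / Real.sqrt α₁ + j₂ / Real.sqrt α₂ = Real.sqrt (2 * h)) :
    (0 < 1 - j₂ / Real.sqrt (2 * h * α₂) ∧ 1 - j₂ / Real.sqrt (2 * h * α₂) < 1) ∧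
    {p : Pt 4 | C1 ![α₁, α₁, α₂, α₂] p.1 = 0 ∧ C2 ![α₁, α₁, α₂, α₂] p = 0 ∧
      H4 p = h ∧ Jmom1 p = j₁ ∧ Jmom2 p = j₂}
    = {p : Pt 4 | ∃ θ₁ θ₂ : ℝ,
        p = (![Real.sqrt (α₁ * (1 - j₂ / Real.sqrt (2 * h * α₂))) * Real.cos θ₁,
               Real.sqrt (α₁ * (1 - j₂ / Real.sqrt (2 * h * α₂))) * Real.sin θ₁,
               (α₂ / (2 * h)) ^ ((1:ℝ)/4) * Real.sqrt j₂ * Real.cos θ₂,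
               (α₂ / (2 * h)) ^ ((1:ℝ)/4) * Real.sqrt j₂ * Real.sin θ₂],
             ![-(Real.sqrt (2 * h * (1 - j₂ / Real.sqrt (2 * h * α₂))) * Real.sin θ₁),
               Real.sqrt (2 * h * (1 - j₂ / Real.sqrt (2 * h * α₂))) * Real.cos θ₁,
               -((2 * h / α₂) ^ ((1:ℝ)/4) * Real.sqrt j₂ * Real.sin θ₂),
               (2 * h / α₂) ^ ((1:ℝ)/4) * Real.sqrt j₂ * Real.cos θ₂])} := by
  have hα₂ : 0 < α₂ := hα₁.trans hα₁₂
  have hsplit : √(2 * h * α₂) = √(2 * h) * √α₂ := sqrt_mul (by positivity) _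
  set s := 1 - j₂ / √(2 * h * α₂) with hs
  have h1s : 1 - s = j₂ / (√(2 * h) * √α₂) := by rw [hs, hsplit]; ring
  have hj₁s : j₁ = √α₁ * √(2 * h) * s := by
    have h₁ := eq_sub_of_add_eq hedge
    rw [div_eq_iff (by positivity)] at h₁
    rw [h₁, hs, hsplit]
    field_simp
  have hs₀ : 0 < s := pos_of_mul_pos_right (hj₁s ▸ hj₁) (by positivity)
  have hs₁ : s < 1 := by linarith [show 0 < 1 - s by rw [h1s]; positivity]
  refine ⟨⟨hs₀, hs₁⟩, energyMomentumFiber_eq_torus (s := s) hα₁ hα₂ hh (by positivity)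
    (by positivity) (sq_sqrt (by positivity)) ?_ (sq_sqrt (by positivity)) ?_ ?_ ?_⟩
  · rw [sq_rpow_quarter_mul_sqrt (by positivity) hj₂.le, sqrt_div' _ (by positivity), h1s]
    field_simp
    exact sq_sqrt hα₂.le
  · rw [sq_rpow_quarter_mul_sqrt (by positivity) hj₂.le, sqrt_div' _ (by positivity), h1s]
    field_simp
    exact sq_sqrt (by positivity)
  · rw [← sq_eq_sq₀ (by positivity) hj₁.le, mul_pow, sq_sqrt (by positivity),
      sq_sqrt (by positivity), hj₁s, mul_pow, mul_pow, sq_sqrt hα₁.le, sq_sqrt (by positivity)]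
    ring
  · rw [← inv_div α₂ (2 * h)]
    exact rpow_quarter_mul_sqrt_mul_inv (by positivity) hj₂.le
end
end

section
/- Let 0<α₀<α₁<α₂ and take parameters (α₀,α₁,α₂,α₃)=(α₀,α₁,α₂,α₂). Define F₀=y₀²+(x₀y₁−x₁y₀)²/(α₀−α₁)+(x₀y₂−x₂y₀)²/(α₀−α₂)+(x₀y₃−x₃y₀)²/(α₀−α₂), F₁=y₁²+(x₁y₀−x₀y₁)²/(α₁−α₀)+(x₁y₂−x₂y₁)²/(α₁−α₂)+(x₁y₃−x₃y₁)²/(α₁−α₂), G=y₂²+y₃²+(x₀y₂−x₂y₀)²/(α₂−α₀)+(x₀y₃−x₃y₀)²/(α₂−α₀)+(x₁y₂−x₂y₁)²/(α₂−α₁)+(x₁y₃−x₃y₁)²/(α₂−α₁), and J=x₂y₃−x₃y₂. Then (i) 2H=F₀+F₁+G identically on ℝ⁴×ℝ⁴, and (ii) for every (x,y) with C₁(x)=0 and C₂(x,y)=0 one has F₀/α₀+F₁/α₁+G/α₂−J²/α₂²=0. -/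
set_option maxHeartbeats 2000000
noncomputable section

/-- The integral `G = F₂ + F₃` of the 112 case:
`G = y₂² + y₃² + (x₀y₂−x₂y₀)²/(α₂−α₀) + (x₀y₃−x₃y₀)²/(α₂−α₀)
   + (x₁y₂−x₂y₁)²/(α₂−α₁) + (x₁y₃−x₃y₁)²/(α₂−α₁)`. -/
def G112 (α₀ α₁ α₂ : ℝ) (p : Pt 4) : ℝ :=
  (p.2 2)^2 + (p.2 3)^2
  + (p.1 0 * p.2 2 - p.1 2 * p.2 0)^2 / (α₂ - α₀)
  + (p.1 0 * p.2 3 - p.1 3 * p.2 0)^2 / (α₂ - α₀)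
  + (p.1 1 * p.2 2 - p.1 2 * p.2 1)^2 / (α₂ - α₁)
  + (p.1 1 * p.2 3 - p.1 3 * p.2 1)^2 / (α₂ - α₁)

/-- The Uhlenbeck–Moser integral `F₀` in the 112 case. -/
def F0112 (α₀ α₁ α₂ : ℝ) (p : Pt 4) : ℝ :=
  (p.2 0)^2
  + (p.1 0 * p.2 1 - p.1 1 * p.2 0)^2 / (α₀ - α₁)
  + (p.1 0 * p.2 2 - p.1 2 * p.2 0)^2 / (α₀ - α₂)
  + (p.1 0 * p.2 3 - p.1 3 * p.2 0)^2 / (α₀ - α₂)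

/-- The Uhlenbeck–Moser integral `F₁` in the 112 case. -/
def F1112 (α₀ α₁ α₂ : ℝ) (p : Pt 4) : ℝ :=
  (p.2 1)^2
  + (p.1 1 * p.2 0 - p.1 0 * p.2 1)^2 / (α₁ - α₀)
  + (p.1 1 * p.2 2 - p.1 2 * p.2 1)^2 / (α₁ - α₂)
  + (p.1 1 * p.2 3 - p.1 3 * p.2 1)^2 / (α₁ - α₂)

lemma pairCancel (s t z : ℝ) (hst : s - t ≠ 0) :
    z / (s - t) + z / (t - s) = 0 := by
  have h : t - s = -(s - t) := by ring
  rw [h, div_neg]; ring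

lemma aux112 (α₀ α₁ α₂ : ℝ) (ha : α₀ ≠ 0) (hb : α₁ ≠ 0) (hc : α₂ ≠ 0)
    (hab : α₀ - α₁ ≠ 0) (hbc : α₁ - α₂ ≠ 0) (hac : α₀ - α₂ ≠ 0)
    (x0 x1 x2 x3 y0 y1 y2 y3 : ℝ)
    (h1 : x0^2/α₀ + x1^2/α₁ + x2^2/α₂ + x3^2/α₂ - 1 = 0)
    (h2 : x0*y0/α₀ + x1*y1/α₁ + x2*y2/α₂ + x3*y3/α₂ = 0) :
    (y0^2 + (x0*y1 - x1*y0)^2/(α₀-α₁) + (x0*y2 - x2*y0)^2/(α₀-α₂) + (x0*y3 - x3*y0)^2/(α₀-α₂)) / α₀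
    + (y1^2 + (x1*y0 - x0*y1)^2/(α₁-α₀) + (x1*y2 - x2*y1)^2/(α₁-α₂) + (x1*y3 - x3*y1)^2/(α₁-α₂)) / α₁
    + (y2^2 + y3^2 + (x0*y2 - x2*y0)^2/(α₂-α₀) + (x0*y3 - x3*y0)^2/(α₂-α₀)
        + (x1*y2 - x2*y1)^2/(α₂-α₁) + (x1*y3 - x3*y1)^2/(α₂-α₁)) / α₂
    - (x2*y3 - x3*y2)^2 / α₂^2 = 0 := by
  have pairId : ∀ s t z : ℝ, s ≠ 0 → t ≠ 0 → s - t ≠ 0 →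
      z / (s - t) / s + z / (t - s) / t = -(z / (s * t)) := by
    intro s t z hs ht hst
    have hts : t - s ≠ 0 := fun h => hst (by linarith [sub_eq_zero.mp h])
    field_simp
    ring
  have hcc : (α₂:ℝ)^2 = α₂ * α₂ := sq α₂
  rw [hcc]
  linear_combination
    pairId α₀ α₁ ((x0 * y1 - x1 * y0)^2) ha hb hab
    + pairId α₀ α₂ ((x0 * y2 - x2 * y0)^2) ha hc hac
    + pairId α₀ α₂ ((x0 * y3 - x3 * y0)^2) ha hc hac
    + pairId α₁ α₂ ((x1 * y2 - x2 * y1)^2) hb hc hbc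
    + pairId α₁ α₂ ((x1 * y3 - x3 * y1)^2) hb hc hbc
    - (y0^2/α₀ + y1^2/α₁ + (y2^2 + y3^2)/α₂) * h1
    + (x0*y0/α₀ + x1*y1/α₁ + (x2*y2 + x3*y3)/α₂) * h2

/-- `2H = F₀ + F₁ + G` identically, and on `C₁ = C₂ = 0` one has
`F₀/α₀ + F₁/α₁ + G/α₂ − J²/α₂² = 0`, where `J = x₂y₃ − x₃y₂`. -/
theorem stmt10 (α₀ α₁ α₂ : ℝ) (hα₀ : 0 < α₀) (hα₀₁ : α₀ < α₁) (hα₁₂ : α₁ < α₂) :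
    (∀ p : Pt 4, 2 * H4 p = F0112 α₀ α₁ α₂ p + F1112 α₀ α₁ α₂ p + G112 α₀ α₁ α₂ p) ∧
    (∀ p : Pt 4, C1 ![α₀, α₁, α₂, α₂] p.1 = 0 → C2 ![α₀, α₁, α₂, α₂] p = 0 →
      F0112 α₀ α₁ α₂ p / α₀ + F1112 α₀ α₁ α₂ p / α₁ + G112 α₀ α₁ α₂ p / α₂
        - (Jmom2 p)^2 / α₂^2 = 0) := by
  have ha : α₀ ≠ 0 := ne_of_gt hα₀
  have hb : α₁ ≠ 0 := ne_of_gt (hα₀.trans hα₀₁)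
  have hc : α₂ ≠ 0 := ne_of_gt (hα₀.trans (hα₀₁.trans hα₁₂))
  have hab : α₀ - α₁ ≠ 0 := sub_ne_zero.mpr (ne_of_lt hα₀₁)
  have hbc : α₁ - α₂ ≠ 0 := sub_ne_zero.mpr (ne_of_lt hα₁₂)
  have hac : α₀ - α₂ ≠ 0 := sub_ne_zero.mpr (ne_of_lt (hα₀₁.trans hα₁₂))
  constructor
  · intro p
    simp only [H4, F0112, F1112, G112]
    linear_combination
      - pairCancel α₀ α₁ ((p.1 0 * p.2 1 - p.1 1 * p.2 0)^2) hab
      - pairCancel α₀ α₂ ((p.1 0 * p.2 2 - p.1 2 * p.2 0)^2) hac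
      - pairCancel α₀ α₂ ((p.1 0 * p.2 3 - p.1 3 * p.2 0)^2) hac
      - pairCancel α₁ α₂ ((p.1 1 * p.2 2 - p.1 2 * p.2 1)^2) hbc
      - pairCancel α₁ α₂ ((p.1 1 * p.2 3 - p.1 3 * p.2 1)^2) hbc
  · intro p h1 h2
    have h1' : (p.1 0)^2/α₀ + (p.1 1)^2/α₁ + (p.1 2)^2/α₂ + (p.1 3)^2/α₂ - 1 = 0 := by
      simpa [C1, Fin.sum_univ_four] using h1
    have h2' : p.1 0 * p.2 0/α₀ + p.1 1 * p.2 1/α₁ + p.1 2 * p.2 2/α₂ + p.1 3 * p.2 3/α₂ = 0 := by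
      simpa [C2, Fin.sum_univ_four] using h2
    have key := aux112 α₀ α₁ α₂ ha hb hc hab hbc hac
      (p.1 0) (p.1 1) (p.1 2) (p.1 3) (p.2 0) (p.2 1) (p.2 2) (p.2 3) h1' h2'
    simpa only [F0112, F1112, G112, Jmom2] using key
end
end

section
/- Let 0<α₀<α₁<α₂ and take parameters (α₀,α₁,α₂,α₃)=(α₀,α₁,α₂,α₂). Suppose (x,y)∈ℝ⁴×ℝ⁴ satisfies C₁(x)=0, C₂(x,y)=0, x₀=0 and y₀=0. Then G=2α₂H/(α₂−α₁)−α₁J²/(α₂(α₂−α₁)), where H=½(y₀²+y₁²+y₂²+y₃²), J=x₂y₃−x₃y₂, and G=y₂²+y₃²+(x₀y₂−x₂y₀)²/(α₂−α₀)+(x₀y₃−x₃y₀)²/(α₂−α₀)+(x₁y₂−x₂y₁)²/(α₂−α₁)+(x₁y₃−x₃y₁)²/(α₂−α₁). -/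
noncomputable section

/-- The constraints eliminate `x₁²` and `x₁y₁`; what remains is the Lagrange identity
`(x₂² + x₃²)(y₂² + y₃²) = (x₂y₂ + x₃y₃)² + (x₂y₃ − x₃y₂)²`. -/
theorem cross_sq_add_cross_sq_of_constraints {a b x₁ x₂ x₃ y₁ y₂ y₃ : ℝ} (ha : a ≠ 0)
    (hb : b ≠ 0) (hC1 : x₁ ^ 2 / a + (x₂ ^ 2 + x₃ ^ 2) / b = 1)
    (hC2 : x₁ * y₁ / a + (x₂ * y₂ + x₃ * y₃) / b = 0) :
    (x₁ * y₂ - x₂ * y₁) ^ 2 + (x₁ * y₃ - x₃ * y₁) ^ 2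
      = a * (y₂ ^ 2 + y₃ ^ 2) + b * y₁ ^ 2 - a * (x₂ * y₃ - x₃ * y₂) ^ 2 / b := by
  field_simp at hC1 hC2 ⊢
  refine mul_left_cancel₀ ha ?_
  linear_combination (a * (y₂ ^ 2 + y₃ ^ 2) + b * y₁ ^ 2) * hC1
    - (x₁ * y₁ * b + a * (x₂ * y₂ + x₃ * y₃)) * hC2

theorem sq_add_sq_add_cross_div_eq_of_constraints {a b x₁ x₂ x₃ y₁ y₂ y₃ : ℝ} (ha : a ≠ 0)
    (hb : b ≠ 0) (hab : b - a ≠ 0) (hC1 : x₁ ^ 2 / a + (x₂ ^ 2 + x₃ ^ 2) / b = 1)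
    (hC2 : x₁ * y₁ / a + (x₂ * y₂ + x₃ * y₃) / b = 0) :
    y₂ ^ 2 + y₃ ^ 2 + ((x₁ * y₂ - x₂ * y₁) ^ 2 + (x₁ * y₃ - x₃ * y₁) ^ 2) / (b - a)
      = b * (y₁ ^ 2 + y₂ ^ 2 + y₃ ^ 2) / (b - a)
        - a * (x₂ * y₃ - x₃ * y₂) ^ 2 / (b * (b - a)) := by
  rw [cross_sq_add_cross_sq_of_constraints ha hb hC1 hC2]
  field_simp
  ring

/-- on the critical set `x₀ = y₀ = 0` of the 112-ellipsoid,
`G = 2α₂H/(α₂−α₁) − α₁J²/(α₂(α₂−α₁))`. -/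
theorem stmt12 (α₀ α₁ α₂ : ℝ) (hα₀ : 0 < α₀) (hα₀₁ : α₀ < α₁) (hα₁₂ : α₁ < α₂)
    (p : Pt 4)
    (hC1 : C1 ![α₀, α₁, α₂, α₂] p.1 = 0)
    (hC2 : C2 ![α₀, α₁, α₂, α₂] p = 0)
    (hx0 : p.1 0 = 0) (hy0 : p.2 0 = 0) :
    G112 α₀ α₁ α₂ p
      = 2 * α₂ * H4 p / (α₂ - α₁) - α₁ * (Jmom2 p)^2 / (α₂ * (α₂ - α₁)) := by
  have hα₁ : 0 < α₁ := hα₀.trans hα₀₁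
  have hα₂ : 0 < α₂ := hα₁.trans hα₁₂
  simp only [C1, C2, Fin.sum_univ_four, Matrix.cons_val, hx0, sub_eq_zero] at hC1 hC2
  have hC1' : p.1 1 ^ 2 / α₁ + (p.1 2 ^ 2 + p.1 3 ^ 2) / α₂ = 1 := by
    linear_combination hC1
  have hC2' : p.1 1 * p.2 1 / α₁ + (p.1 2 * p.2 2 + p.1 3 * p.2 3) / α₂ = 0 := by
    linear_combination hC2
  have hG := sq_add_sq_add_cross_div_eq_of_constraints hα₁.ne' hα₂.ne'
    (sub_pos.2 hα₁₂).ne' hC1' hC2'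
  simp only [G112, H4, Jmom2, hx0, hy0]
  linear_combination hG
end
end

section
/- Let 0<α₀<α₁<α₂ and take parameters (α₀,α₁,α₂,α₃)=(α₀,α₁,α₂,α₂). Suppose (x,y)∈ℝ⁴×ℝ⁴ satisfies C₁(x)=0, C₂(x,y)=0, x₁=0 and y₁=0. Then G=2α₂H/(α₂−α₀)−α₀J²/(α₂(α₂−α₀)), where H=½(y₀²+y₁²+y₂²+y₃²), J=x₂y₃−x₃y₂, and G=y₂²+y₃²+(x₀y₂−x₂y₀)²/(α₂−α₀)+(x₀y₃−x₃y₀)²/(α₂−α₀)+(x₁y₂−x₂y₁)²/(α₂−α₁)+(x₁y₃−x₃y₁)²/(α₂−α₁). -/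
noncomputable section

/- Clearing denominators, `ab(b-a)(G - RHS) = (a(y₂² + y₃²) + b y₀²) P - Q²`, where `P = 0` and `Q = 0`
are the two constraints with denominators cleared; this is where the coefficients come from. -/
theorem spheroid_integral_eq {a b : ℝ} (ha : a ≠ 0) (hb : b ≠ 0) (hab : b - a ≠ 0)
    {x₀ x₂ x₃ y₀ y₂ y₃ : ℝ}
    (hC1 : x₀ ^ 2 / a + x₂ ^ 2 / b + x₃ ^ 2 / b = 1)
    (hC2 : x₀ * y₀ / a + x₂ * y₂ / b + x₃ * y₃ / b = 0) :
    y₂ ^ 2 + y₃ ^ 2 + (x₀ * y₂ - x₂ * y₀) ^ 2 / (b - a) + (x₀ * y₃ - x₃ * y₀) ^ 2 / (b - a)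
      = 2 * b * ((y₀ ^ 2 + y₂ ^ 2 + y₃ ^ 2) / 2) / (b - a)
        - a * (x₂ * y₃ - x₃ * y₂) ^ 2 / (b * (b - a)) := by
  have hP : b * x₀ ^ 2 + a * (x₂ ^ 2 + x₃ ^ 2) - a * b = 0 := by
    field_simp at hC1; linear_combination hC1
  have hQ : b * (x₀ * y₀) + a * (x₂ * y₂ + x₃ * y₃) = 0 := by
    field_simp at hC2; linear_combination hC2
  linear_combination (norm := (field_simp; ring))
    (a * (y₂ ^ 2 + y₃ ^ 2) + b * y₀ ^ 2) / (a * b * (b - a)) * hP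
      - (b * (x₀ * y₀) + a * (x₂ * y₂ + x₃ * y₃)) / (a * b * (b - a)) * hQ

/-- on the critical set `x₁ = y₁ = 0` of the 112-ellipsoid,
`G = 2α₂H/(α₂−α₀) − α₀J²/(α₂(α₂−α₀))`. -/
theorem stmt13 (α₀ α₁ α₂ : ℝ) (hα₀ : 0 < α₀) (hα₀₁ : α₀ < α₁) (hα₁₂ : α₁ < α₂)
    (p : Pt 4)
    (hC1 : C1 ![α₀, α₁, α₂, α₂] p.1 = 0)
    (hC2 : C2 ![α₀, α₁, α₂, α₂] p = 0)
    (hx1 : p.1 1 = 0) (hy1 : p.2 1 = 0) :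
    G112 α₀ α₁ α₂ p
      = 2 * α₂ * H4 p / (α₂ - α₀) - α₀ * (Jmom2 p)^2 / (α₂ * (α₂ - α₀)) := by
  simp only [C1, C2, Fin.sum_univ_four, Matrix.cons_val_zero, Matrix.cons_val_one,
    Matrix.cons_val_two, Matrix.cons_val_three, Matrix.head_cons, Matrix.tail_cons,
    hx1, hy1, sub_eq_zero] at hC1 hC2
  simp only [G112, H4, Jmom2, hx1, hy1]
  linear_combination spheroid_integral_eq (a := α₀) (b := α₂) hα₀.ne' (by linarith) (by linarith)
    (x₀ := p.1 0) (x₂ := p.1 2) (x₃ := p.1 3) (y₀ := p.2 0) (y₂ := p.2 2) (y₃ := p.2 3)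
    (by linear_combination hC1) (by linear_combination hC2)
end
end

section
/- Let 0<α₀<α₁<α₂, h>0, and take parameters (α₀,α₁,α₂,α₃)=(α₀,α₁,α₂,α₂). Then the set {(x,y)∈ℝ⁴×ℝ⁴ : C₁(x)=0, C₂(x,y)=0, H(x,y)=h, J(x,y)=0, G(x,y)=0} equals {(x,y) : x₂=x₃=y₂=y₃=0, x₀²/α₀+x₁²/α₁=1, x₀y₀/α₀+x₁y₁/α₁=0, y₀²+y₁²=2h}, where H=½(y₀²+y₁²+y₂²+y₃²), J=x₂y₃−x₃y₂, and G=y₂²+y₃²+(x₀y₂−x₂y₀)²/(α₂−α₀)+(x₀y₃−x₃y₀)²/(α₂−α₀)+(x₁y₂−x₂y₁)²/(α₂−α₁)+(x₁y₃−x₃y₁)²/(α₂−α₁). -/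
noncomputable section

set_option maxHeartbeats 1000000 in
/-- the fiber of the energy-momentum map `(H,J,G)` of the
112-ellipsoid over `(h,0,0)` is the set of unit-speed geodesic states of the
ellipse in the `(x₀,x₁)`-plane (two circles). -/
theorem stmt14 (α₀ α₁ α₂ h : ℝ) (hα₀ : 0 < α₀) (hα₀₁ : α₀ < α₁) (hα₁₂ : α₁ < α₂)
    (hh : 0 < h) :
    {p : Pt 4 | C1 ![α₀, α₁, α₂, α₂] p.1 = 0 ∧ C2 ![α₀, α₁, α₂, α₂] p = 0 ∧
      H4 p = h ∧ Jmom2 p = 0 ∧ G112 α₀ α₁ α₂ p = 0}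
    = {p : Pt 4 | p.1 2 = 0 ∧ p.1 3 = 0 ∧ p.2 2 = 0 ∧ p.2 3 = 0 ∧
        (p.1 0)^2 / α₀ + (p.1 1)^2 / α₁ = 1 ∧
        p.1 0 * p.2 0 / α₀ + p.1 1 * p.2 1 / α₁ = 0 ∧
        (p.2 0)^2 + (p.2 1)^2 = 2 * h} := by
  have h20 : (0:ℝ) < α₂ - α₀ := by linarith
  have h21 : (0:ℝ) < α₂ - α₁ := by linarith
  ext p
  obtain ⟨x, y⟩ := p
  simp only [Set.mem_setOf_eq, C1, C2, H4, Jmom2, G112, Fin.sum_univ_four,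
    Matrix.cons_val_zero, Matrix.cons_val_one, Matrix.head_cons,
    Matrix.cons_val_two, Matrix.cons_val_three, Matrix.tail_cons]
  constructor
  · rintro ⟨hc1, hc2, hH, hJ, hG⟩
    have t1 : (0:ℝ) ≤ (x 0 * y 2 - x 2 * y 0)^2 / (α₂ - α₀) :=
      div_nonneg (sq_nonneg _) h20.le
    have t2 : (0:ℝ) ≤ (x 0 * y 3 - x 3 * y 0)^2 / (α₂ - α₀) :=
      div_nonneg (sq_nonneg _) h20.le
    have t3 : (0:ℝ) ≤ (x 1 * y 2 - x 2 * y 1)^2 / (α₂ - α₁) :=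
      div_nonneg (sq_nonneg _) h21.le
    have t4 : (0:ℝ) ≤ (x 1 * y 3 - x 3 * y 1)^2 / (α₂ - α₁) :=
      div_nonneg (sq_nonneg _) h21.le
    have hy2 : y 2 = 0 := by
      have : y 2 ^ 2 = 0 := by linarith [sq_nonneg (y 2), sq_nonneg (y 3)]
      exact pow_eq_zero_iff (n := 2) (by norm_num) |>.mp this
    have hy3 : y 3 = 0 := by
      have : y 3 ^ 2 = 0 := by linarith [sq_nonneg (y 2), sq_nonneg (y 3)]
      exact pow_eq_zero_iff (n := 2) (by norm_num) |>.mp this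
    have sz : ∀ a : ℝ, ∀ c : ℝ, 0 < c → a^2 / c = 0 → a = 0 := by
      intro a c hc hac
      have := (div_eq_zero_iff.mp hac).resolve_right (by positivity)
      exact pow_eq_zero_iff (n := 2) (by norm_num) |>.mp this
    rw [hy2, hy3] at hG
    have s1 : (0:ℝ) ≤ (x 0 * 0 - x 2 * y 0)^2 / (α₂ - α₀) :=
      div_nonneg (sq_nonneg _) h20.le
    have s2 : (0:ℝ) ≤ (x 0 * 0 - x 3 * y 0)^2 / (α₂ - α₀) :=
      div_nonneg (sq_nonneg _) h20.le
    have s3 : (0:ℝ) ≤ (x 1 * 0 - x 2 * y 1)^2 / (α₂ - α₁) :=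
      div_nonneg (sq_nonneg _) h21.le
    have s4 : (0:ℝ) ≤ (x 1 * 0 - x 3 * y 1)^2 / (α₂ - α₁) :=
      div_nonneg (sq_nonneg _) h21.le
    have e1 : x 2 * y 0 = 0 := by
      have := sz (x 0 * 0 - x 2 * y 0) _ h20 (by linarith)
      linarith
    have e2 : x 3 * y 0 = 0 := by
      have := sz (x 0 * 0 - x 3 * y 0) _ h20 (by linarith)
      linarith
    have e3 : x 2 * y 1 = 0 := by
      have := sz (x 1 * 0 - x 2 * y 1) _ h21 (by linarith)
      linarith
    have e4 : x 3 * y 1 = 0 := by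
      have := sz (x 1 * 0 - x 3 * y 1) _ h21 (by linarith)
      linarith
    have hE : y 0 ^ 2 + y 1 ^ 2 = 2 * h := by
      rw [hy2, hy3] at hH; linarith
    have h2h : (2:ℝ) * h ≠ 0 := by positivity
    have hx2 : x 2 = 0 := by
      have hz : x 2 * (2 * h) = x 2 * y 0 * y 0 + x 2 * y 1 * y 1 := by
        rw [← hE]; ring
      rw [e1, e3] at hz; simp at hz
      exact hz.resolve_right hh.ne'
    have hx3 : x 3 = 0 := by
      have hz : x 3 * (2 * h) = x 3 * y 0 * y 0 + x 3 * y 1 * y 1 := by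
        rw [← hE]; ring
      rw [e2, e4] at hz; simp at hz
      exact hz.resolve_right hh.ne'
    simp only [hx2, hx3, hy2, hy3] at hc1 hc2
    norm_num at hc1 hc2
    exact ⟨hx2, hx3, hy2, hy3, by linarith, by linarith, hE⟩
  · rintro ⟨hx2, hx3, hy2, hy3, hc1, hc2, hE⟩
    rw [hx2, hx3, hy2, hy3]
    refine ⟨by norm_num; linarith, by norm_num; linarith, by linarith, by ring,
      by simp⟩
end
end

section
/- Let 0<α₀<α₂<α₃ and take parameters (α₀,α₁,α₂,α₃)=(α₀,α₀,α₂,α₃). Define G=y₀²+y₁²+(x₀y₂−x₂y₀)²/(α₀−α₂)+(x₁y₂−x₂y₁)²/(α₀−α₂)+(x₀y₃−x₃y₀)²/(α₀−α₃)+(x₁y₃−x₃y₁)²/(α₀−α₃), F₂=y₂²+(x₂y₀−x₀y₂)²/(α₂−α₀)+(x₂y₁−x₁y₂)²/(α₂−α₀)+(x₂y₃−x₃y₂)²/(α₂−α₃), F₃=y₃²+(x₃y₀−x₀y₃)²/(α₃−α₀)+(x₃y₁−x₁y₃)²/(α₃−α₀)+(x₃y₂−x₂y₃)²/(α₃−α₂),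 and J=x₀y₁−x₁y₀. Then (i) 2H=G+F₂+F₃ identically on ℝ⁴×ℝ⁴, and (ii) for every (x,y) with C₁(x)=0 and C₂(x,y)=0 one has G/α₀+F₂/α₂+F₃/α₃−J²/α₀²=0. -/
noncomputable section

/-- The integral `G = F₀ + F₁` of the 211 case:
`G = y₀² + y₁² + (x₀y₂−x₂y₀)²/(α₀−α₂) + (x₁y₂−x₂y₁)²/(α₀−α₂)
   + (x₀y₃−x₃y₀)²/(α₀−α₃) + (x₁y₃−x₃y₁)²/(α₀−α₃)`. -/
def G211 (α₀ α₂ α₃ : ℝ) (p : Pt 4) : ℝ :=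
  (p.2 0)^2 + (p.2 1)^2
  + (p.1 0 * p.2 2 - p.1 2 * p.2 0)^2 / (α₀ - α₂)
  + (p.1 1 * p.2 2 - p.1 2 * p.2 1)^2 / (α₀ - α₂)
  + (p.1 0 * p.2 3 - p.1 3 * p.2 0)^2 / (α₀ - α₃)
  + (p.1 1 * p.2 3 - p.1 3 * p.2 1)^2 / (α₀ - α₃)

/-- The Uhlenbeck–Moser integral `F₂` in the 211 case. -/
def F2211 (α₀ α₂ α₃ : ℝ) (p : Pt 4) : ℝ :=
  (p.2 2)^2
  + (p.1 2 * p.2 0 - p.1 0 * p.2 2)^2 / (α₂ - α₀)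
  + (p.1 2 * p.2 1 - p.1 1 * p.2 2)^2 / (α₂ - α₀)
  + (p.1 2 * p.2 3 - p.1 3 * p.2 2)^2 / (α₂ - α₃)

/-- The Uhlenbeck–Moser integral `F₃` in the 211 case. -/
def F3211 (α₀ α₂ α₃ : ℝ) (p : Pt 4) : ℝ :=
  (p.2 3)^2
  + (p.1 3 * p.2 0 - p.1 0 * p.2 3)^2 / (α₃ - α₀)
  + (p.1 3 * p.2 1 - p.1 1 * p.2 3)^2 / (α₃ - α₀)
  + (p.1 3 * p.2 2 - p.1 2 * p.2 3)^2 / (α₃ - α₂)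

/-- `2H = G + F₂ + F₃` identically, and on `C₁ = C₂ = 0` one has
`G/α₀ + F₂/α₂ + F₃/α₃ − J²/α₀² = 0`, where `J = x₀y₁ − x₁y₀`. -/
theorem stmt16 (α₀ α₂ α₃ : ℝ) (hα₀ : 0 < α₀) (hα₀₂ : α₀ < α₂) (hα₂₃ : α₂ < α₃) :
    (∀ p : Pt 4, 2 * H4 p = G211 α₀ α₂ α₃ p + F2211 α₀ α₂ α₃ p + F3211 α₀ α₂ α₃ p) ∧
    (∀ p : Pt 4, C1 ![α₀, α₀, α₂, α₃] p.1 = 0 → C2 ![α₀, α₀, α₂, α₃] p = 0 →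
      G211 α₀ α₂ α₃ p / α₀ + F2211 α₀ α₂ α₃ p / α₂ + F3211 α₀ α₂ α₃ p / α₃
        - (Jmom1 p)^2 / α₀^2 = 0) := by
  have h02 : α₀ - α₂ ≠ 0 := by nlinarith
  have h03 : α₀ - α₃ ≠ 0 := by nlinarith
  have h23 : α₂ - α₃ ≠ 0 := by nlinarith
  have h20 : α₂ - α₀ ≠ 0 := by nlinarith
  have h30 : α₃ - α₀ ≠ 0 := by nlinarith
  have h32 : α₃ - α₂ ≠ 0 := by nlinarith
  have h0 : α₀ ≠ 0 := ne_of_gt hα₀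
  have h2 : α₂ ≠ 0 := by nlinarith
  have h3 : α₃ ≠ 0 := by nlinarith
  constructor
  · intro p
    simp only [H4, G211, F2211, F3211]
    field_simp
    ring
  · intro p hc1 hc2
    simp only [C1, Fin.sum_univ_four, Matrix.cons_val_zero, Matrix.cons_val_one,
      Matrix.head_cons, Matrix.cons_val_two, Matrix.tail_cons, Matrix.cons_val_three,
      sub_eq_zero] at hc1
    simp only [C2, Fin.sum_univ_four, Matrix.cons_val_zero, Matrix.cons_val_one,
      Matrix.head_cons, Matrix.cons_val_two, Matrix.tail_cons, Matrix.cons_val_three] at hc2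
    have key : G211 α₀ α₂ α₃ p / α₀ + F2211 α₀ α₂ α₃ p / α₂ + F3211 α₀ α₂ α₃ p / α₃
        - (Jmom1 p)^2 / α₀^2 =
        ((p.1 0 * p.2 0 / α₀ + p.1 1 * p.2 1 / α₀ + p.1 2 * p.2 2 / α₂ + p.1 3 * p.2 3 / α₃))^2
        - ((p.1 0)^2 / α₀ + (p.1 1)^2 / α₀ + (p.1 2)^2 / α₂ + (p.1 3)^2 / α₃ - 1)
          * ((p.2 0)^2 / α₀ + (p.2 1)^2 / α₀ + (p.2 2)^2 / α₂ + (p.2 3)^2 / α₃) := by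
      simp only [G211, F2211, F3211, Jmom1]
      field_simp
      ring
    rw [key, hc2, hc1]
    ring
end
end

section
/- Let 0<α₀<α₁ and take parameters (α₀,α₁,α₂,α₃)=(α₀,α₁,α₁,α₁). Define the angular momenta L₁₂=x₁y₂−x₂y₁, L₁₃=x₁y₃−x₃y₁, L₂₃=x₂y₃−x₃y₂ and J²=L₁₂²+L₁₃²+L₂₃². Then for every point (x,y)∈ℝ⁴×ℝ⁴ with C₁(x)=0 and C₂(x,y)=0: (i) the Dirac brackets {H,L₁₂}, {H,L₁₃}, {H,L₂₃} all vanish at (x,y); (ii) {J²,L₁₂}, {J²,L₁₃}, {J²,L₂₃} all vanish at (x,y); and (iii) {L₁₂,L₁₃}(x,y)=x₂y₃−x₃y₂. Here H=½(y₀²+y₁²+y₂²+y₃²). -/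
noncomputable section

set_option maxHeartbeats 2000000

/-- The angular momentum `L₁₂ = x₁y₂ − x₂y₁`. -/
def L12 (p : Pt 4) : ℝ := p.1 1 * p.2 2 - p.1 2 * p.2 1

/-- The angular momentum `L₁₃ = x₁y₃ − x₃y₁`. -/
def L13 (p : Pt 4) : ℝ := p.1 1 * p.2 3 - p.1 3 * p.2 1

/-- The angular momentum `L₂₃ = x₂y₃ − x₃y₂`. -/
def L23 (p : Pt 4) : ℝ := p.1 2 * p.2 3 - p.1 3 * p.2 2

/-- The squared total angular momentum `J² = L₁₂² + L₁₃² + L₂₃²`. -/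
def Jsq (p : Pt 4) : ℝ := (L12 p)^2 + (L13 p)^2 + (L23 p)^2


/-! ### Auxiliary machinery for computing the partial derivatives -/

/-- Coordinate projection `q ↦ q.1 i` as a continuous linear map. -/
def dXc (i : Fin 4) : Pt 4 →L[ℝ] ℝ :=
  (ContinuousLinearMap.proj i).comp (ContinuousLinearMap.fst ℝ (Fin 4 → ℝ) (Fin 4 → ℝ))

/-- Coordinate projection `q ↦ q.2 i` as a continuous linear map. -/
def dYc (i : Fin 4) : Pt 4 →L[ℝ] ℝ :=
  (ContinuousLinearMap.proj i).comp (ContinuousLinearMap.snd ℝ (Fin 4 → ℝ) (Fin 4 → ℝ))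

lemma hXd (i : Fin 4) (p : Pt 4) : HasFDerivAt (fun q : Pt 4 => q.1 i) (dXc i) p :=
  (dXc i).hasFDerivAt

lemma hYd (i : Fin 4) (p : Pt 4) : HasFDerivAt (fun q : Pt 4 => q.2 i) (dYc i) p :=
  (dYc i).hasFDerivAt

/-- Derivative of the angular momentum `q ↦ q.1 i * q.2 j − q.1 j * q.2 i`. -/
def dLc (i j : Fin 4) (p : Pt 4) : Pt 4 →L[ℝ] ℝ :=
  (p.1 i • dYc j + p.2 j • dXc i) - (p.1 j • dYc i + p.2 i • dXc j)

lemma hLd (i j : Fin 4) (p : Pt 4) :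
    HasFDerivAt (fun q : Pt 4 => q.1 i * q.2 j - q.1 j * q.2 i) (dLc i j p) p :=
  ((hXd i p).mul (hYd j p)).sub ((hXd j p).mul (hYd i p))

lemma hL12d (p : Pt 4) : HasFDerivAt L12 (dLc 1 2 p) p := hLd 1 2 p
lemma hL13d (p : Pt 4) : HasFDerivAt L13 (dLc 1 3 p) p := hLd 1 3 p
lemma hL23d (p : Pt 4) : HasFDerivAt L23 (dLc 2 3 p) p := hLd 2 3 p

lemma pdx_L12 (p : Pt 4) : pdx L12 p = ![0, p.2 2, -p.2 1, 0] := by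
  funext k; rw [pdx, (hL12d p).fderiv]
  fin_cases k <;> norm_num [dLc, dXc, dYc, Pi.single_apply, Fin.ext_iff] <;>
    simp (config := { decide := true })

lemma pdy_L12 (p : Pt 4) : pdy L12 p = ![0, -p.1 2, p.1 1, 0] := by
  funext k; rw [pdy, (hL12d p).fderiv]
  fin_cases k <;> norm_num [dLc, dXc, dYc, Pi.single_apply, Fin.ext_iff] <;>
    simp (config := { decide := true })

lemma pdx_L13 (p : Pt 4) : pdx L13 p = ![0, p.2 3, 0, -p.2 1] := by
  funext k; rw [pdx, (hL13d p).fderiv]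
  fin_cases k <;> norm_num [dLc, dXc, dYc, Pi.single_apply, Fin.ext_iff] <;>
    simp (config := { decide := true })

lemma pdy_L13 (p : Pt 4) : pdy L13 p = ![0, -p.1 3, 0, p.1 1] := by
  funext k; rw [pdy, (hL13d p).fderiv]
  fin_cases k <;> norm_num [dLc, dXc, dYc, Pi.single_apply, Fin.ext_iff] <;>
    simp (config := { decide := true })

lemma pdx_L23 (p : Pt 4) : pdx L23 p = ![0, 0, p.2 3, -p.2 2] := by
  funext k; rw [pdx, (hL23d p).fderiv]
  fin_cases k <;> norm_num [dLc, dXc, dYc, Pi.single_apply, Fin.ext_iff] <;>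
    simp (config := { decide := true })

lemma pdy_L23 (p : Pt 4) : pdy L23 p = ![0, 0, -p.1 3, p.1 2] := by
  funext k; rw [pdy, (hL23d p).fderiv]
  fin_cases k <;> norm_num [dLc, dXc, dYc, Pi.single_apply, Fin.ext_iff] <;>
    simp (config := { decide := true })

lemma hH4d (p : Pt 4) : HasFDerivAt H4
    ((1/2 : ℝ) • ((p.2 0 • dYc 0 + p.2 0 • dYc 0) + (p.2 1 • dYc 1 + p.2 1 • dYc 1) +
      (p.2 2 • dYc 2 + p.2 2 • dYc 2) + (p.2 3 • dYc 3 + p.2 3 • dYc 3))) p := by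
  have h := (((((hYd 0 p).mul (hYd 0 p)).add ((hYd 1 p).mul (hYd 1 p))).add
      ((hYd 2 p).mul (hYd 2 p))).add ((hYd 3 p).mul (hYd 3 p))).const_mul (1/2 : ℝ)
  have hfun : H4 = (fun q : Pt 4 => (1/2 : ℝ) *
      (q.2 0 * q.2 0 + q.2 1 * q.2 1 + q.2 2 * q.2 2 + q.2 3 * q.2 3)) := by
    funext q; simp [H4]; ring
  rw [hfun]; exact h

lemma pdx_H4 (p : Pt 4) : pdx H4 p = ![0, 0, 0, 0] := by
  funext k; rw [pdx, (hH4d p).fderiv]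
  fin_cases k <;> norm_num [dYc, Pi.single_apply, Fin.ext_iff] <;>
    simp (config := { decide := true })

lemma pdy_H4 (p : Pt 4) : pdy H4 p = ![p.2 0, p.2 1, p.2 2, p.2 3] := by
  funext k; rw [pdy, (hH4d p).fderiv]
  fin_cases k <;> norm_num [dYc, Pi.single_apply, Fin.ext_iff] <;>
    simp (config := { decide := true }) <;> ring

lemma hJsqd (p : Pt 4) : HasFDerivAt Jsq
    (((L12 p • dLc 1 2 p + L12 p • dLc 1 2 p) + (L13 p • dLc 1 3 p + L13 p • dLc 1 3 p)) +
      (L23 p • dLc 2 3 p + L23 p • dLc 2 3 p)) p := by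
  have h := (((hL12d p).mul (hL12d p)).add ((hL13d p).mul (hL13d p))).add
      ((hL23d p).mul (hL23d p))
  have hfun : Jsq = (fun q : Pt 4 => L12 q * L12 q + L13 q * L13 q + L23 q * L23 q) := by
    funext q; simp [Jsq]; ring
  rw [hfun]; exact h

lemma pdx_Jsq (p : Pt 4) (k : Fin 4) :
    pdx Jsq p k = 2 * L12 p * pdx L12 p k + 2 * L13 p * pdx L13 p k
      + 2 * L23 p * pdx L23 p k := by
  rw [pdx, (hJsqd p).fderiv]
  simp only [pdx, (hL12d p).fderiv, (hL13d p).fderiv, (hL23d p).fderiv,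
    ContinuousLinearMap.add_apply, ContinuousLinearMap.smul_apply, smul_eq_mul]
  ring

lemma pdy_Jsq (p : Pt 4) (k : Fin 4) :
    pdy Jsq p k = 2 * L12 p * pdy L12 p k + 2 * L13 p * pdy L13 p k
      + 2 * L23 p * pdy L23 p k := by
  rw [pdy, (hJsqd p).fderiv]
  simp only [pdy, (hL12d p).fderiv, (hL13d p).fderiv, (hL23d p).fderiv,
    ContinuousLinearMap.add_apply, ContinuousLinearMap.smul_apply, smul_eq_mul]
  ring

/-- on the constraint set of the `SO(1)×SO(3)` ellipsoid (parameters
`(α₀,α₁,α₁,α₁)`): (i) `{H,L₁₂} = {H,L₁₃} = {H,L₂₃} = 0`;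
(ii) `{J²,L₁₂} = {J²,L₁₃} = {J²,L₂₃} = 0`; (iii) `{L₁₂,L₁₃} = x₂y₃ − x₃y₂`. -/
theorem stmt17 (α₀ α₁ : ℝ) (hα₀ : 0 < α₀) (hα₀₁ : α₀ < α₁)
    (p : Pt 4)
    (hC1 : C1 ![α₀, α₁, α₁, α₁] p.1 = 0)
    (hC2 : C2 ![α₀, α₁, α₁, α₁] p = 0) :
    (dirac ![α₀, α₁, α₁, α₁] H4 L12 p = 0 ∧
     dirac ![α₀, α₁, α₁, α₁] H4 L13 p = 0 ∧
     dirac ![α₀, α₁, α₁, α₁] H4 L23 p = 0) ∧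
    (dirac ![α₀, α₁, α₁, α₁] Jsq L12 p = 0 ∧
     dirac ![α₀, α₁, α₁, α₁] Jsq L13 p = 0 ∧
     dirac ![α₀, α₁, α₁, α₁] Jsq L23 p = 0) ∧
    dirac ![α₀, α₁, α₁, α₁] L12 L13 p = p.1 2 * p.2 3 - p.1 3 * p.2 2 := by
  have hb0 : (0:ℝ) < α₁ := lt_trans hα₀ hα₀₁
  have ha : α₀ ≠ 0 := ne_of_gt hα₀
  have hb : α₁ ≠ 0 := ne_of_gt hb0
  simp only [C1, C2, Fin.sum_univ_four, Matrix.cons_val_zero, Matrix.cons_val_one,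
    Matrix.head_cons, Matrix.cons_val_two, Matrix.tail_cons, Matrix.cons_val_three] at hC1 hC2
  have hD : Dq ![α₀, α₁, α₁, α₁] p.1 ≠ 0 := by
    intro h
    simp only [Dq, Fin.sum_univ_four, Matrix.cons_val_zero, Matrix.cons_val_one,
      Matrix.head_cons, Matrix.cons_val_two, Matrix.tail_cons, Matrix.cons_val_three] at h
    have n0 : (0:ℝ) ≤ (p.1 0)^2 / α₀^2 := by positivity
    have n1 : (0:ℝ) ≤ (p.1 1)^2 / α₁^2 := by positivity
    have n2 : (0:ℝ) ≤ (p.1 2)^2 / α₁^2 := by positivity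
    have n3 : (0:ℝ) ≤ (p.1 3)^2 / α₁^2 := by positivity
    have e0 : (p.1 0)^2 / α₀^2 = 0 := by linarith
    have e1 : (p.1 1)^2 / α₁^2 = 0 := by linarith
    have e2 : (p.1 2)^2 / α₁^2 = 0 := by linarith
    have e3 : (p.1 3)^2 / α₁^2 = 0 := by linarith
    have x0 : p.1 0 = 0 := by
      have := (div_eq_zero_iff.mp e0).resolve_right (pow_ne_zero 2 ha)
      exact pow_eq_zero_iff (n := 2) (by norm_num) |>.mp this
    have x1 : p.1 1 = 0 := by
      have := (div_eq_zero_iff.mp e1).resolve_right (pow_ne_zero 2 hb)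
      exact pow_eq_zero_iff (n := 2) (by norm_num) |>.mp this
    have x2 : p.1 2 = 0 := by
      have := (div_eq_zero_iff.mp e2).resolve_right (pow_ne_zero 2 hb)
      exact pow_eq_zero_iff (n := 2) (by norm_num) |>.mp this
    have x3 : p.1 3 = 0 := by
      have := (div_eq_zero_iff.mp e3).resolve_right (pow_ne_zero 2 hb)
      exact pow_eq_zero_iff (n := 2) (by norm_num) |>.mp this
    rw [x0, x1, x2, x3] at hC1
    norm_num at hC1
  set D := Dq ![α₀, α₁, α₁, α₁] p.1 with hDdef
  refine ⟨⟨?_, ?_, ?_⟩, ⟨?_, ?_, ?_⟩, ?_⟩ <;>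
  · simp only [dirac, Fin.sum_univ_four, pdx_Jsq, pdy_Jsq, pdx_H4, pdy_H4, pdx_L12, pdy_L12,
      pdx_L13, pdy_L13, pdx_L23, pdy_L23, L12, L13, L23, Matrix.cons_val_zero,
      Matrix.cons_val_one, Matrix.head_cons, Matrix.cons_val_two, Matrix.tail_cons,
      Matrix.cons_val_three, ← hDdef]
    simp (config := { decide := true }) only [reduceIte, if_true, if_false]
    field_simp
    ring
end
end

section
/- Let 0<α₀ and 0<α₁ and take parameters (α₀,α₁,α₂,α₃)=(α₀,α₁,α₁,α₁). For every (x,y)∈ℝ⁴×ℝ⁴ with C₁(x)=0, one has L₁₂²+L₁₃²+L₂₃² ≤ 2α₁H(x,y), where L₁₂=x₁y₂−x₂y₁, L₁₃=x₁y₃−x₃y₁, L₂₃=x₂y₃−x₃y₂ and H=½(y₀²+y₁²+y₂²+y₃²). -/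
noncomputable section

/-- on `C₁ = 0` for parameters `(α₀,α₁,α₁,α₁)`,
`L₁₂² + L₁₃² + L₂₃² ≤ 2α₁H`. -/
theorem stmt18 (α₀ α₁ : ℝ) (hα₀ : 0 < α₀) (hα₁ : 0 < α₁)
    (p : Pt 4)
    (hC1 : C1 ![α₀, α₁, α₁, α₁] p.1 = 0) :
    Jsq p ≤ 2 * α₁ * H4 p := by
  simp only [C1, Fin.sum_univ_four, Matrix.cons_val_zero, Matrix.cons_val_one,
    Matrix.head_cons, Matrix.cons_val_two, Matrix.tail_cons, Matrix.cons_val_three] at hC1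
  simp only [Jsq, L12, L13, L23, H4]
  set x0 := p.1 0; set x1 := p.1 1; set x2 := p.1 2; set x3 := p.1 3
  set y0 := p.2 0; set y1 := p.2 1; set y2 := p.2 2; set y3 := p.2 3
  have hr : x1^2 + x2^2 + x3^2 ≤ α₁ := by
    have h0 : 0 ≤ x0^2 / α₀ := by positivity
    have h1 : (x1^2 + x2^2 + x3^2)/α₁ ≤ 1 := by rw [add_div, add_div]; linarith
    rw [div_le_one hα₁] at h1
    exact h1
  nlinarith [sq_nonneg (x1*y1 + x2*y2 + x3*y3), sq_nonneg y0, sq_nonneg y1, sq_nonneg y2,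
    sq_nonneg y3, sq_nonneg (x1*y2 - x2*y1), sq_nonneg (x1*y3 - x3*y1),
    sq_nonneg (x2*y3 - x3*y2), mul_nonneg (sub_nonneg.mpr hr) (by positivity : (0:ℝ) ≤ y1^2+y2^2+y3^2)]
end
end

section
/- Let 0<α₀<α₁, h>0, and take parameters (α₀,α₁,α₂,α₃)=(α₀,α₁,α₁,α₁). Then the set {(x,y)∈ℝ⁴×ℝ⁴ : C₁(x)=0, C₂(x,y)=0, H(x,y)=h, L₁₂²+L₁₃²+L₂₃²=2α₁h} equals {(x,y) : x₀=0, y₀=0, x₁²+x₂²+x₃²=α₁, y₁²+y₂²+y₃²=2h, x₁y₁+x₂y₂+x₃y₃=0}, where L₁₂=x₁y₂−x₂y₁, L₁₃=x₁y₃−x₃y₁, L₂₃=x₂y₃−x₃y₂ and H=½(y₀²+y₁²+y₂²+y₃²). In particular, at any point of this fiber x₀=0 and y₀=0. -/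
noncomputable section

/-! On the ellipsoid, write `x = (x₀, x')`, `y = (y₀, y')` with `x', y' ∈ ℝ³`. Lagrange's identity
gives `J² = |x'|²|y'|² − (x'·y')²`, while the constraint and the energy give `|x'|² ≤ α₁` (with
equality iff `x₀ = 0`) and `|y'|² ≤ 2h` (with equality iff `y₀ = 0`). Hence `J² ≤ 2α₁h`, and
equality forces `x₀ = y₀ = 0`, `|x'|² = α₁`, `|y'|² = 2h` and `x'·y' = 0`. -/

theorem eq_and_eq_of_mul_le_mul {R : Type*} [CommRing R] [LinearOrder R] [IsStrictOrderedRing R]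
    {a b A B : R} (ha : a ≤ A) (hb : b ≤ B) (hb₀ : 0 ≤ b) (hA : 0 < A) (hB : 0 < B)
    (h : A * B ≤ a * b) : a = A ∧ b = B := by
  have hAb : A * B ≤ A * b := h.trans (mul_le_mul_of_nonneg_right ha hb₀)
  have hbB : b = B := le_antisymm hb (le_of_mul_le_mul_left hAb hA)
  subst hbB
  exact ⟨le_antisymm ha (le_of_mul_le_mul_right h hB), rfl⟩

theorem C1_eq (α₀ α₁ : ℝ) (x : Fin 4 → ℝ) :
    C1 ![α₀, α₁, α₁, α₁] x = x 0 ^ 2 / α₀ + (x 1 ^ 2 + x 2 ^ 2 + x 3 ^ 2) / α₁ - 1 := by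
  simp only [C1, Fin.sum_univ_four, Matrix.cons_val_zero, Matrix.cons_val_one,
    Matrix.cons_val_two, Matrix.cons_val_three, Matrix.head_cons, Matrix.tail_cons]
  ring

theorem C2_eq (α₀ α₁ : ℝ) (p : Pt 4) :
    C2 ![α₀, α₁, α₁, α₁] p =
      p.1 0 * p.2 0 / α₀ + (p.1 1 * p.2 1 + p.1 2 * p.2 2 + p.1 3 * p.2 3) / α₁ := by
  simp only [C2, Fin.sum_univ_four, Matrix.cons_val_zero, Matrix.cons_val_one,
    Matrix.cons_val_two, Matrix.cons_val_three, Matrix.head_cons, Matrix.tail_cons]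
  ring

theorem two_mul_H4 (p : Pt 4) : 2 * H4 p = p.2 0 ^ 2 + (p.2 1 ^ 2 + p.2 2 ^ 2 + p.2 3 ^ 2) := by
  unfold H4
  ring

theorem Jsq_add_sq_inner (p : Pt 4) :
    Jsq p + (p.1 1 * p.2 1 + p.1 2 * p.2 2 + p.1 3 * p.2 3) ^ 2 =
      (p.1 1 ^ 2 + p.1 2 ^ 2 + p.1 3 ^ 2) * (p.2 1 ^ 2 + p.2 2 ^ 2 + p.2 3 ^ 2) := by
  unfold Jsq L12 L13 L23
  ring

theorem eq_of_Jsq_eq_max {α₀ α₁ h : ℝ} (hα₀ : 0 < α₀) (hα₁ : 0 < α₁) (hh : 0 < h)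
    {p : Pt 4} (hC1 : C1 ![α₀, α₁, α₁, α₁] p.1 = 0) (hH : H4 p = h)
    (hJ : Jsq p = 2 * α₁ * h) :
    p.1 0 = 0 ∧ p.2 0 = 0 ∧ (p.1 1)^2 + (p.1 2)^2 + (p.1 3)^2 = α₁ ∧
      (p.2 1)^2 + (p.2 2)^2 + (p.2 3)^2 = 2 * h ∧
      p.1 1 * p.2 1 + p.1 2 * p.2 2 + p.1 3 * p.2 3 = 0 := by
  have hx : p.1 0 ^ 2 / α₀ + ((p.1 1)^2 + (p.1 2)^2 + (p.1 3)^2) / α₁ = 1 := by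
    rw [C1_eq] at hC1
    linarith
  have hy : p.2 0 ^ 2 + ((p.2 1)^2 + (p.2 2)^2 + (p.2 3)^2) = 2 * h := by
    rw [← two_mul_H4, hH]
  have hx₀ : 0 ≤ p.1 0 ^ 2 / α₀ := by positivity
  have hy₀ : 0 ≤ p.2 0 ^ 2 := sq_nonneg _
  have ha : (p.1 1)^2 + (p.1 2)^2 + (p.1 3)^2 ≤ α₁ := (div_le_one hα₁).1 (by linarith)
  have hb : (p.2 1)^2 + (p.2 2)^2 + (p.2 3)^2 ≤ 2 * h := by linarith
  have hlag := Jsq_add_sq_inner p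
  obtain ⟨ha', hb'⟩ := eq_and_eq_of_mul_le_mul ha hb (by positivity) hα₁ (by positivity)
    (by nlinarith [sq_nonneg (p.1 1 * p.2 1 + p.1 2 * p.2 2 + p.1 3 * p.2 3)])
  rw [ha', hb', hJ] at hlag
  refine ⟨?_, ?_, ha', hb', ?_⟩
  · have : p.1 0 ^ 2 / α₀ = 0 := by rw [ha', div_self hα₁.ne'] at hx; linarith
    simpa [hα₀.ne'] using this
  · simpa using (show p.2 0 ^ 2 = 0 by linarith)
  · simpa using (show (p.1 1 * p.2 1 + p.1 2 * p.2 2 + p.1 3 * p.2 3) ^ 2 = 0 by linarith)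

theorem Jsq_eq_max_of_eq {α₀ α₁ h : ℝ} (hα₁ : α₁ ≠ 0) {p : Pt 4} (hx₀ : p.1 0 = 0) (hy₀ : p.2 0 = 0)
    (hx : (p.1 1)^2 + (p.1 2)^2 + (p.1 3)^2 = α₁) (hy : (p.2 1)^2 + (p.2 2)^2 + (p.2 3)^2 = 2 * h)
    (hxy : p.1 1 * p.2 1 + p.1 2 * p.2 2 + p.1 3 * p.2 3 = 0) :
    C1 ![α₀, α₁, α₁, α₁] p.1 = 0 ∧ C2 ![α₀, α₁, α₁, α₁] p = 0 ∧
      H4 p = h ∧ Jsq p = 2 * α₁ * h := by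
  have hlag := Jsq_add_sq_inner p
  rw [hx, hy, hxy] at hlag
  refine ⟨?_, ?_, ?_, by linarith⟩
  · simp [C1_eq, hx₀, hx, hα₁]
  · simp [C2_eq, hx₀, hxy]
  · have hH := two_mul_H4 p
    rw [hy₀, hy] at hH
    linarith

/-- the fiber of the energy-Casimir map `(H,J²)` of the
`SO(1)×SO(3)` ellipsoid over the maximal value `(h, 2α₁h)` is the unit circle
bundle over the sphere of radius `√α₁` (diffeomorphic to `SO(3)`); in particular
`x₀ = 0` and `y₀ = 0` on this fiber. -/
theorem stmt19 (α₀ α₁ h : ℝ) (hα₀ : 0 < α₀) (hα₀₁ : α₀ < α₁) (hh : 0 < h) :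
    ({p : Pt 4 | C1 ![α₀, α₁, α₁, α₁] p.1 = 0 ∧ C2 ![α₀, α₁, α₁, α₁] p = 0 ∧
        H4 p = h ∧ Jsq p = 2 * α₁ * h}
      = {p : Pt 4 | p.1 0 = 0 ∧ p.2 0 = 0 ∧
          (p.1 1)^2 + (p.1 2)^2 + (p.1 3)^2 = α₁ ∧
          (p.2 1)^2 + (p.2 2)^2 + (p.2 3)^2 = 2 * h ∧
          p.1 1 * p.2 1 + p.1 2 * p.2 2 + p.1 3 * p.2 3 = 0}) ∧
    (∀ p : Pt 4, C1 ![α₀, α₁, α₁, α₁] p.1 = 0 → C2 ![α₀, α₁, α₁, α₁] p = 0 →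
      H4 p = h → Jsq p = 2 * α₁ * h → p.1 0 = 0 ∧ p.2 0 = 0) := by
  have hα₁ : 0 < α₁ := hα₀.trans hα₀₁
  refine ⟨Set.ext fun p => ⟨fun ⟨hC1, _, hH, hJ⟩ => eq_of_Jsq_eq_max hα₀ hα₁ hh hC1 hH hJ,
    fun ⟨hx₀, hy₀, hx, hy, hxy⟩ => Jsq_eq_max_of_eq hα₁.ne' hx₀ hy₀ hx hy hxy⟩, ?_⟩
  intro p hC1 _ hH hJ
  obtain ⟨hx₀, hy₀, -⟩ := eq_of_Jsq_eq_max hα₀ hα₁ hh hC1 hH hJ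
  exact ⟨hx₀, hy₀⟩
end
end
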